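/- arXiv:2604.06164 — 10 statements merged into one kernel-verified Lean document; each statement's English description precedes it below -/
import Mathlib

section
/- If G is a graph with n vertices and m edges, then the k-supertoken graph of G has exactly m · binomial(n+k-2, k-1) edges. -/
/-- The `k`-supertoken graph of a graph `G`: vertices are size-`k` multisets
(elements of `Sym V k`) of vertices of `G`; two multisets are adjacent if one is
obtained from the other by moving one token along an edge of `G`. -/
def SimpleGraph.superToken {V : Type*} (G : SimpleGraph V) (k : ℕ) :
    SimpleGraph (Sym V k) where
  Adj A B := ∃ u v : V, G.Adj u v ∧
    ∃ S : Multiset V, (A : Multiset V) = u ::ₘ S ∧ (B : Multiset V) = v ::ₘ S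
  symm := by
    constructor
    rintro A B ⟨u, v, huv, S, hA, hB⟩
    exact ⟨v, u, huv.symm, S, hB, hA⟩
  loopless := by
    constructor
    rintro A ⟨u, v, huv, S, hA, hB⟩
    rw [hA] at hB
    exact G.ne_of_adj huv ((Multiset.cons_inj_left S).mp hB)

lemma cons_cons_eq {V : Type*} [DecidableEq V] {u v u' v' : V} {S S' : Multiset V}
    (huv : u ≠ v) (h' : u' ≠ v') (h1 : u ::ₘ S = u' ::ₘ S') (h2 : v ::ₘ S = v' ::ₘ S') :
    u = u' ∧ v = v' ∧ S = S' := by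
  have hS : S = S' := by
    ext a
    have e1 := congrArg (Multiset.count a) h1
    have e2 := congrArg (Multiset.count a) h2
    simp only [Multiset.count_cons] at e1 e2
    by_cases hu : a = u <;> by_cases hv : a = v <;> by_cases hu' : a = u' <;>
      by_cases hv' : a = v' <;> simp_all <;> omega
  subst hS
  exact ⟨(Multiset.cons_inj_left S).mp h1, (Multiset.cons_inj_left S).mp h2, rfl⟩

lemma superToken_aux {V : Type*} [Fintype V] [DecidableEq V]
    (G : SimpleGraph V) (n : ℕ) :
    Nat.card (G.superToken (n+1)).edgeSet =
      Nat.card G.edgeSet * Fintype.card (Sym V n) := by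
  have hf : ∀ p : G.edgeSet × Sym V n,
      Sym2.map (fun u => u ::ₛ p.2) p.1.1 ∈ (G.superToken (n+1)).edgeSet := by
    rintro ⟨⟨e, he⟩, S⟩
    induction e using Sym2.ind with
    | _ u v =>
      rw [Sym2.map_pair_eq, SimpleGraph.mem_edgeSet]
      exact ⟨u, v, he, S, Sym.coe_cons S u, Sym.coe_cons S v⟩
  set f : G.edgeSet × Sym V n → (G.superToken (n+1)).edgeSet :=
    fun p => ⟨Sym2.map (fun u => u ::ₛ p.2) p.1.1, hf p⟩ with hfdef
  have hbij : Function.Bijective f := by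
    constructor
    · rintro ⟨⟨e, he⟩, S⟩ ⟨⟨e', he'⟩, S'⟩ heq
      induction e using Sym2.ind with
      | _ u v =>
      induction e' using Sym2.ind with
      | _ u' v' =>
        simp only [hfdef, Subtype.mk.injEq, Sym2.map_pair_eq] at heq
        rw [Sym2.eq_iff] at heq
        have huv : u ≠ v := (G.mem_edgeSet.mp he).ne
        have huv' : u' ≠ v' := (G.mem_edgeSet.mp he').ne
        rcases heq with ⟨h1, h2⟩ | ⟨h1, h2⟩
        · have c1 : (u ::ₘ (S : Multiset V)) = (u' ::ₘ (S' : Multiset V)) := by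
            rw [← Sym.coe_cons, ← Sym.coe_cons, h1]
          have c2 : (v ::ₘ (S : Multiset V)) = (v' ::ₘ (S' : Multiset V)) := by
            rw [← Sym.coe_cons, ← Sym.coe_cons, h2]
          obtain ⟨hu, hv, hS⟩ := cons_cons_eq huv huv' c1 c2
          subst hu hv
          refine Prod.ext (Subtype.ext rfl) (Sym.coe_injective hS)
        · have c1 : (u ::ₘ (S : Multiset V)) = (v' ::ₘ (S' : Multiset V)) := by
            rw [← Sym.coe_cons, ← Sym.coe_cons, h1]
          have c2 : (v ::ₘ (S : Multiset V)) = (u' ::ₘ (S' : Multiset V)) := by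
            rw [← Sym.coe_cons, ← Sym.coe_cons, h2]
          obtain ⟨hu, hv, hS⟩ := cons_cons_eq huv huv'.symm c1 c2
          subst hu hv
          exact Prod.ext (Subtype.ext (Sym2.eq_swap)) (Sym.coe_injective hS)
    · rintro ⟨E, hE⟩
      induction E using Sym2.ind with
      | _ A B =>
        obtain ⟨u, v, huv, S, hA, hB⟩ := (G.superToken (n+1)).mem_edgeSet.mp hE
        have hScard : Multiset.card S = n := by
          have h := congrArg Multiset.card hA
          rw [Sym.card_coe, Multiset.card_cons] at h
          omega
        have hA' : A = u ::ₛ (⟨S, hScard⟩ : Sym V n) :=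
          Sym.coe_injective (hA.trans (Sym.coe_cons (⟨S, hScard⟩ : Sym V n) u).symm)
        have hB' : B = v ::ₛ (⟨S, hScard⟩ : Sym V n) :=
          Sym.coe_injective (hB.trans (Sym.coe_cons (⟨S, hScard⟩ : Sym V n) v).symm)
        refine ⟨⟨⟨s(u, v), G.mem_edgeSet.mpr huv⟩, ⟨S, hScard⟩⟩, ?_⟩
        apply Subtype.ext
        simp only [hfdef, Sym2.map_pair_eq]
        rw [hA', hB']
  rw [← Nat.card_eq_of_bijective f hbij, Nat.card_prod, Nat.card_eq_fintype_card (α := Sym V n)]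

/-- If `G` is a graph with `n` vertices and `m` edges, then the
`k`-supertoken graph of `G` has exactly `m * (n + k - 2).choose (k - 1)` edges. -/
theorem superToken_card_edges {V : Type*} [Fintype V] [DecidableEq V]
    (G : SimpleGraph V) (k : ℕ) (hk : 1 ≤ k) :
    Nat.card (G.superToken k).edgeSet =
      Nat.card G.edgeSet * (Fintype.card V + k - 2).choose (k - 1) := by
  obtain ⟨n, rfl⟩ : ∃ n, k = n + 1 := ⟨k - 1, (Nat.succ_pred_eq_of_pos hk).symm⟩
  rw [superToken_aux, Sym.card_sym_eq_choose]
  congr 2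
end

section
/- The 2-supertoken graph of the cycle C_n has exactly n^2 edges. -/
namespace STAux

variable {V : Type*}

def stPair (u w : V) : Sym V 2 := ⟨u ::ₘ {w}, by simp⟩

lemma stPair_comm (u w : V) : stPair u w = stPair w u := by
  apply Subtype.ext
  exact Multiset.cons_swap u w 0

lemma stPair_eq_stPair {a b c d : V} :
    stPair a b = stPair c d ↔ (a = c ∧ b = d) ∨ (a = d ∧ b = c) := by
  constructor
  · intro h
    have h' : (a ::ₘ {b} : Multiset V) = c ::ₘ {d} := congrArg Subtype.val h
    rcases Multiset.cons_eq_cons.mp h' with ⟨h1, h2⟩ | ⟨hne, cs, h1, h2⟩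
    · exact .inl ⟨h1, Multiset.singleton_inj.mp h2⟩
    · rcases (Multiset.singleton_eq_cons_iff _).mp h1 with ⟨hbc, hcs⟩
      subst hcs
      rcases (Multiset.singleton_eq_cons_iff _).mp h2 with ⟨hda, _⟩
      exact .inr ⟨hda.symm, hbc⟩
  · rintro (⟨rfl, rfl⟩ | ⟨rfl, rfl⟩)
    · rfl
    · exact stPair_comm a b

lemma superToken_two_adj (G : SimpleGraph V) (A B : Sym V 2) :
    (G.superToken 2).Adj A B ↔
      ∃ u v w, G.Adj u v ∧ A = stPair u w ∧ B = stPair v w := by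
  constructor
  · rintro ⟨u, v, huv, S, hA, hB⟩
    have hcard : Multiset.card S = 1 := by
      have h2 : Multiset.card (u ::ₘ S) = 2 := by rw [← hA]; exact A.2
      simpa using h2
    obtain ⟨w, rfl⟩ := Multiset.card_eq_one.mp hcard
    exact ⟨u, v, w, huv, Subtype.ext hA, Subtype.ext hB⟩
  · rintro ⟨u, v, w, huv, rfl, rfl⟩
    exact ⟨u, v, huv, {w}, rfl, rfl⟩

/-- the Sym2 map -/
def edgeMap (w : V) : Sym2 V → Sym2 (Sym V 2) :=
  Sym2.lift ⟨fun u v => s(stPair u w, stPair v w), fun u v => Sym2.eq_swap⟩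

lemma edgeMap_mk (w u v : V) : edgeMap w s(u, v) = s(stPair u w, stPair v w) := rfl

noncomputable def edgeEquiv (G : SimpleGraph V) :
    G.edgeSet × V ≃ (G.superToken 2).edgeSet := by
  apply Equiv.ofBijective (fun p => ⟨edgeMap p.2 p.1.1, by
    obtain ⟨⟨e, he⟩, w⟩ := p
    induction e with
    | _ u v =>
      rw [edgeMap_mk]
      rw [SimpleGraph.mem_edgeSet] at he ⊢
      exact (superToken_two_adj G _ _).mpr ⟨u, v, w, he, rfl, rfl⟩⟩)
  constructor
  · rintro ⟨⟨e, he⟩, w⟩ ⟨⟨e', he'⟩, w'⟩ h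
    simp only [Subtype.mk.injEq] at h
    induction e with
    | _ u v =>
    induction e' with
    | _ u' v' =>
      rw [SimpleGraph.mem_edgeSet] at he he'
      rw [edgeMap_mk, edgeMap_mk, Sym2.eq_iff] at h
      have key : (s(u,v) : Sym2 V) = s(u',v') ∧ w = w' := by
        rcases h with ⟨h1, h2⟩ | ⟨h1, h2⟩ <;>
        rcases h1' : stPair_eq_stPair.mp h1 with ⟨ha, hb⟩ | ⟨ha, hb⟩ <;>
        rcases h2' : stPair_eq_stPair.mp h2 with ⟨hc, hd⟩ | ⟨hc, hd⟩ <;>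
          subst_vars <;>
          first
            | exact ⟨rfl, rfl⟩
            | exact ⟨Sym2.eq_swap, rfl⟩
            | exact absurd rfl (G.ne_of_adj he)
            | exact absurd rfl (G.ne_of_adj he')
      obtain ⟨h1, rfl⟩ := key
      simp [Prod.ext_iff, Subtype.ext_iff, h1]
  · rintro ⟨e, he⟩
    induction e with
    | _ A B =>
      rw [SimpleGraph.mem_edgeSet, superToken_two_adj] at he
      obtain ⟨u, v, w, huv, rfl, rfl⟩ := he
      exact ⟨⟨⟨s(u,v), huv⟩, w⟩, rfl⟩

end STAux

/-- The 2-supertoken graph of the cycle `C_n` (for `n ≥ 3`) has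
exactly `n ^ 2` edges. -/
theorem superToken_cycle_card_edges (n : ℕ) (hn : 3 ≤ n) :
    Nat.card ((SimpleGraph.cycleGraph n).superToken 2).edgeSet = n ^ 2 := by
  obtain ⟨m, rfl⟩ : ∃ m, n = m + 3 := ⟨n - 3, by omega⟩
  set G := SimpleGraph.cycleGraph (m + 3) with hG
  have hcardE : G.edgeFinset.card = m + 3 := by
    have hsum := G.sum_degrees_eq_twice_card_edges
    have : ∀ v : Fin (m + 3), G.degree v = 2 := fun v =>
      SimpleGraph.cycleGraph_degree_three_le
    rw [Finset.sum_congr rfl (fun v _ => this v)] at hsum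
    simp only [Finset.sum_const, Finset.card_univ, Fintype.card_fin, smul_eq_mul] at hsum
    omega
  have h1 : Nat.card ((G.superToken 2).edgeSet) = Nat.card (G.edgeSet × Fin (m + 3)) :=
    Nat.card_congr (STAux.edgeEquiv G).symm
  rw [h1, Nat.card_prod, Nat.card_eq_fintype_card, Nat.card_eq_fintype_card,
    ← SimpleGraph.edgeFinset_card, hcardE, Fintype.card_fin]
  ring
end

section
/- Let G be a bipartite graph with parts C_1 and C_2 of sizes c_1 ≤ c_2. For every k ≥ 2, the independence number of the k-supertoken graph F_k(G) is at least the sum over i = 0, ..., ⌊k/2⌋ of binomial(c_1 + 2i − 1, 2i) · binomial(c_2 + k − 2i − 1, k − 2i). -/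
/-- For a bipartite graph `G` with parts of sizes `c₁ ≤ c₂` and any
`k ≥ 2`, the independence number of the `k`-supertoken graph is at least
`∑_{i=0}^{⌊k/2⌋} C(c₁+2i−1, 2i) · C(c₂+k−2i−1, k−2i)`. -/
theorem superToken_indepNum_bipartite_lower {V : Type*} [Fintype V] [DecidableEq V]
    (G : SimpleGraph V) (C₁ C₂ : Finset V)
    (hpart : ∀ v : V, v ∈ C₁ ↔ v ∉ C₂)
    (hedge : ∀ u v : V, G.Adj u v → (u ∈ C₁ ↔ v ∈ C₂))
    (hc : C₁.card ≤ C₂.card)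
    (k : ℕ) (hk : 2 ≤ k) :
    ∃ s : Finset (Sym V k),
      (∀ A ∈ s, ∀ B ∈ s, ¬ (G.superToken k).Adj A B) ∧
      ∑ i ∈ Finset.range (k / 2 + 1),
        (C₁.card + 2 * i - 1).choose (2 * i) *
          (C₂.card + k - 2 * i - 1).choose (k - 2 * i) ≤ s.card := by
  classical
  set s : Finset (Sym V k) :=
    Finset.univ.filter (fun A => Even ((A : Multiset V).countP (· ∈ C₁))) with hs
  refine ⟨s, ?_, ?_⟩
  · rintro A hA B hB ⟨u, v, huv, S, hAe, hBe⟩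
    simp only [hs, Finset.mem_filter, Finset.mem_univ, true_and] at hA hB
    rw [hAe, Multiset.countP_cons] at hA
    rw [hBe, Multiset.countP_cons] at hB
    have huvC : (u ∈ C₁) ↔ ¬ (v ∈ C₁) := by
      rw [hedge u v huv]; have := hpart v; tauto
    by_cases hu : u ∈ C₁
    · have hv := huvC.mp hu
      rw [if_pos hu, Nat.even_add_one] at hA
      rw [if_neg hv, add_zero] at hB
      exact hA hB
    · have hv : v ∈ C₁ := by tauto
      rw [if_neg hu, add_zero] at hA
      rw [if_pos hv, Nat.even_add_one] at hB
      exact hB hA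
  · -- define the pieces
    set g : (i : ℕ) → 2 * i ≤ k →
        (Sym {x // x ∈ C₁} (2 * i) × Sym {x // x ∈ C₂} (k - 2 * i)) → Sym V k :=
      fun i h p => ⟨(p.1 : Multiset {x // x ∈ C₁}).map Subtype.val +
          (p.2 : Multiset {x // x ∈ C₂}).map Subtype.val, by
        simp [p.1.2, p.2.2]; omega⟩ with hg
    set t : ℕ → Finset (Sym V k) := fun i =>
      if h : 2 * i ≤ k then Finset.image (g i h) Finset.univ else ∅ with ht
    have hcount : ∀ i (h : 2 * i ≤ k) p, ((g i h p : Sym V k) : Multiset V).countP (· ∈ C₁) = 2 * i := by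
      intro i h p
      have hco : ((g i h p : Sym V k) : Multiset V) =
          (p.1 : Multiset {x // x ∈ C₁}).map Subtype.val +
          (p.2 : Multiset {x // x ∈ C₂}).map Subtype.val := rfl
      rw [hco, Multiset.countP_add]
      have h1 : ((p.1 : Multiset {x // x ∈ C₁}).map Subtype.val).countP (· ∈ C₁) =
          Multiset.card ((p.1 : Multiset {x // x ∈ C₁}).map Subtype.val) := by
        rw [Multiset.countP_eq_card]
        rintro a ha
        obtain ⟨⟨b, hb⟩, _, rfl⟩ := Multiset.mem_map.mp ha
        exact hb
      have h2 : ((p.2 : Multiset {x // x ∈ C₂}).map Subtype.val).countP (· ∈ C₁) = 0 := by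
        rw [Multiset.countP_eq_zero]
        rintro a ha
        obtain ⟨⟨b, hb⟩, _, rfl⟩ := Multiset.mem_map.mp ha
        exact fun hb1 => (hpart b).mp hb1 hb
      rw [h1, h2, Multiset.card_map, Sym.card_coe, add_zero]
    have hsub : ∀ i, t i ⊆ s := by
      intro i A hA
      simp only [ht] at hA
      split_ifs at hA with h
      · obtain ⟨p, _, rfl⟩ := Finset.mem_image.mp hA
        simp only [hs, Finset.mem_filter, Finset.mem_univ, true_and]
        rw [hcount i h p]
        exact even_two_mul i
      · exact absurd hA (Finset.notMem_empty _)
    have hdisj : ∀ i ∈ Finset.range (k / 2 + 1), ∀ j ∈ Finset.range (k / 2 + 1),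
        i ≠ j → Disjoint (t i) (t j) := by
      intro i _ j _ hij
      rw [Finset.disjoint_left]
      intro A hAi hAj
      simp only [ht] at hAi hAj
      apply hij
      split_ifs at hAi hAj with h1 h2
      · obtain ⟨p, _, rfl⟩ := Finset.mem_image.mp hAi
        obtain ⟨q, _, hq⟩ := Finset.mem_image.mp hAj
        have := hcount i h1 p
        rw [← hq, hcount j h2 q] at this
        omega
      all_goals first
        | exact absurd hAi (Finset.notMem_empty _)
        | exact absurd hAj (Finset.notMem_empty _)
    have hginj : ∀ i (h : 2 * i ≤ k), Function.Injective (g i h) := by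
      intro i h p q hpq
      have hm : ((p.1 : Multiset {x // x ∈ C₁}).map Subtype.val +
          (p.2 : Multiset {x // x ∈ C₂}).map Subtype.val) =
          ((q.1 : Multiset {x // x ∈ C₁}).map Subtype.val +
          (q.2 : Multiset {x // x ∈ C₂}).map Subtype.val) := by
        have := congrArg (fun A : Sym V k => (A : Multiset V)) hpq
        simpa [hg] using this
      have hfil : ∀ (r : Sym {x // x ∈ C₁} (2*i)) (r' : Sym {x // x ∈ C₂} (k - 2*i)),
          ((r : Multiset {x // x ∈ C₁}).map Subtype.val +
            (r' : Multiset {x // x ∈ C₂}).map Subtype.val).filter (· ∈ C₁) =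
            (r : Multiset {x // x ∈ C₁}).map Subtype.val := by
        intro r r'
        rw [Multiset.filter_add]
        have e1 : ((r : Multiset {x // x ∈ C₁}).map Subtype.val).filter (· ∈ C₁) =
            (r : Multiset {x // x ∈ C₁}).map Subtype.val := by
          rw [Multiset.filter_eq_self]
          rintro a ha
          obtain ⟨⟨b, hb⟩, _, rfl⟩ := Multiset.mem_map.mp ha
          exact hb
        have e2 : ((r' : Multiset {x // x ∈ C₂}).map Subtype.val).filter (· ∈ C₁) = 0 := by
          rw [Multiset.filter_eq_nil]
          rintro a ha
          obtain ⟨⟨b, hb⟩, _, rfl⟩ := Multiset.mem_map.mp ha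
          exact fun hb1 => (hpart b).mp hb1 hb
        rw [e1, e2, add_zero]
      have h1 : (p.1 : Multiset {x // x ∈ C₁}).map Subtype.val =
          (q.1 : Multiset {x // x ∈ C₁}).map Subtype.val := by
        have := congrArg (Multiset.filter (· ∈ C₁)) hm
        rwa [hfil p.1 p.2, hfil q.1 q.2] at this
      have h2 : (p.2 : Multiset {x // x ∈ C₂}).map Subtype.val =
          (q.2 : Multiset {x // x ∈ C₂}).map Subtype.val := by
        rw [h1] at hm
        exact add_left_cancel hm
      have e1 : p.1 = q.1 := Subtype.ext (Multiset.map_injective Subtype.val_injective h1)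
      have e2 : p.2 = q.2 := Subtype.ext (Multiset.map_injective Subtype.val_injective h2)
      exact Prod.ext e1 e2
    have hcardt : ∀ i ∈ Finset.range (k / 2 + 1),
        (t i).card = (C₁.card + 2 * i - 1).choose (2 * i) *
          (C₂.card + k - 2 * i - 1).choose (k - 2 * i) := by
      intro i hi
      rw [Finset.mem_range] at hi
      have h : 2 * i ≤ k := by omega
      rw [ht]
      simp only [dif_pos h]
      rw [Finset.card_image_of_injective _ (hginj i h), Finset.card_univ]
      rw [Fintype.card_prod, Sym.card_sym_eq_choose, Sym.card_sym_eq_choose,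
        Fintype.card_coe, Fintype.card_coe]
      congr 2
      omega
    calc ∑ i ∈ Finset.range (k / 2 + 1),
          (C₁.card + 2 * i - 1).choose (2 * i) *
            (C₂.card + k - 2 * i - 1).choose (k - 2 * i)
        = ∑ i ∈ Finset.range (k / 2 + 1), (t i).card :=
          (Finset.sum_congr rfl (fun i hi => (hcardt i hi).symm))
      _ = ((Finset.range (k / 2 + 1)).biUnion t).card := (Finset.card_biUnion hdisj).symm
      _ ≤ s.card := Finset.card_le_card (Finset.biUnion_subset.mpr fun i _ => hsub i)
end

section
/- For every graph G and every k ≥ 1, the clique number of the k-supertoken graph F_k(G) equals the clique number of G. -/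
private lemma superToken_adj_counts {V : Type*} [DecidableEq V] {G : SimpleGraph V} {k : ℕ}
    {A B : Sym V k} (h : (G.superToken k).Adj A B) :
    ∃ u v : V, G.Adj u v ∧ ∀ x : V,
      Multiset.count x (A : Multiset V) + (if x = v then 1 else 0)
        = Multiset.count x (B : Multiset V) + (if x = u then 1 else 0) := by
  obtain ⟨u, v, huv, S, hA, hB⟩ := h
  refine ⟨u, v, huv, fun x => ?_⟩
  rw [hA, hB]
  simp only [Multiset.count_cons]
  split_ifs <;> omega

private lemma clique_of_fun {V : Type*} [Fintype V] [DecidableEq V] {G : SimpleGraph V} {k : ℕ}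
    {t : Finset (Sym V k)}
    (f : Sym V k → V)
    (hinj : ∀ C ∈ t, ∀ D ∈ t, f C = f D → C = D)
    (hadj : ∀ C ∈ t, ∀ D ∈ t, C ≠ D → G.Adj (f C) (f D)) :
    ∃ s : Finset V, G.IsClique ↑s ∧ s.card = t.card := by
  refine ⟨t.image f, ?_, ?_⟩
  · intro x hx y hy hxy
    simp only [Finset.coe_image, Set.mem_image, Finset.mem_coe] at hx hy
    obtain ⟨C, hC, rfl⟩ := hx
    obtain ⟨D, hD, rfl⟩ := hy
    exact hadj C hC D hD (fun h => hxy (by rw [h]))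
  · exact Finset.card_image_of_injOn (fun C hC D hD h => hinj C hC D hD h)

private lemma exists_clique_of_superToken_clique {V : Type*} [Fintype V] [DecidableEq V]
    {G : SimpleGraph V} {k : ℕ} (hk : 1 ≤ k) (t : Finset (Sym V k))
    (ht : (G.superToken k).IsClique ↑t) :
    ∃ s : Finset V, G.IsClique ↑s ∧ s.card = t.card := by
  classical
  rcases Nat.lt_or_ge t.card 2 with hcard | hcard
  · rcases Nat.lt_or_ge t.card 1 with h0 | h1
    · refine ⟨∅, by simp, ?_⟩
      rw [Finset.card_empty]
      omega
    · have h1' : t.card = 1 := by omega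
      obtain ⟨A, hA⟩ := Finset.card_eq_one.mp h1'
      have hAne : (A : Multiset V) ≠ 0 := by
        intro h
        have := Sym.card_coe (s := A)
        rw [h] at this
        simp at this
        omega
      obtain ⟨v, hv⟩ := Multiset.exists_mem_of_ne_zero hAne
      refine ⟨{v}, by simp, ?_⟩
      rw [h1']
      simp
  · obtain ⟨A, hAt, B, hBt, hABne⟩ := Finset.one_lt_card.mp hcard
    have hadjAB := ht (Finset.mem_coe.mpr hAt) (Finset.mem_coe.mpr hBt) hABne
    obtain ⟨u, v, huv, hAB⟩ := superToken_adj_counts hadjAB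
    have hune : u ≠ v := G.ne_of_adj huv
    have huA : 1 ≤ Multiset.count u (A : Multiset V) := by
      have h := hAB u
      rw [if_neg hune, if_pos rfl] at h
      omega
    set S : Multiset V := (A : Multiset V) - {u} with hSdef
    have hS : ∀ x, Multiset.count x (A : Multiset V)
        = Multiset.count x S + (if x = u then 1 else 0) := by
      intro x
      rw [hSdef, Multiset.count_sub, Multiset.count_singleton]
      split_ifs with h
      · subst h; omega
      · omega
    have hB' : ∀ x, Multiset.count x (B : Multiset V)
        = Multiset.count x S + (if x = v then 1 else 0) := by
      intro x
      have h1 := hAB x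
      have h2 := hS x
      split_ifs at h1 h2 ⊢ <;> omega
    have hcardS : Multiset.card S = k - 1 := by
      rw [hSdef, Multiset.card_sub (by
        rw [Multiset.le_iff_count]
        intro a
        rw [Multiset.count_singleton]
        split_ifs with h
        · subst h; omega
        · omega)]
      rw [Sym.card_coe]
      simp
    have type1 : ∀ C : Sym V k,
        (∀ x, Multiset.count x S ≤ Multiset.count x (C : Multiset V)) →
        ∃ w, ∀ x, Multiset.count x (C : Multiset V)
          = Multiset.count x S + (if x = w then 1 else 0) := by
      intro C hle
      have hle' : S ≤ (C : Multiset V) := Multiset.le_iff_count.mpr hle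
      have h1 : Multiset.card ((C : Multiset V) - S) = 1 := by
        rw [Multiset.card_sub hle', hcardS, Sym.card_coe]
        omega
      obtain ⟨w, hw⟩ := Multiset.card_eq_one.mp h1
      refine ⟨w, fun x => ?_⟩
      have hc := congrArg (Multiset.count x) hw
      rw [Multiset.count_sub, Multiset.count_singleton] at hc
      have := hle x
      split_ifs at hc ⊢ <;> omega
    by_cases hP1 : ∀ C ∈ t, ∀ x, Multiset.count x S ≤ Multiset.count x (C : Multiset V)
    · -- all elements contain S
      set f : Sym V k → V := fun C =>
        if h : ∃ w, ∀ x, Multiset.count x (C : Multiset V)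
            = Multiset.count x S + (if x = w then 1 else 0) then h.choose else u with hfdef
      have hfspec : ∀ C ∈ t, ∀ x, Multiset.count x (C : Multiset V)
          = Multiset.count x S + (if x = f C then 1 else 0) := by
        intro C hC
        have hex := type1 C (hP1 C hC)
        have hfC : f C = hex.choose := by simp only [hfdef]; exact dif_pos hex
        rw [hfC]
        exact hex.choose_spec
      have hinj : ∀ C ∈ t, ∀ D ∈ t, f C = f D → C = D := by
        intro C hC D hD hfeq
        apply Sym.coe_injective
        apply Multiset.ext.mpr
        intro x
        rw [hfspec C hC x, hfspec D hD x, hfeq]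
      apply clique_of_fun f hinj
      intro C hC D hD hne
      obtain ⟨p, q, hpq, h⟩ := superToken_adj_counts
        (ht (Finset.mem_coe.mpr hC) (Finset.mem_coe.mpr hD) hne)
      have hne' : f C ≠ f D := fun heq => hne (hinj C hC D hD heq)
      have h1 := h (f C)
      rw [hfspec C hC (f C), hfspec D hD (f C)] at h1
      rw [if_pos rfl, if_neg hne'] at h1
      have h2 := h (f D)
      rw [hfspec C hC (f D), hfspec D hD (f D)] at h2
      rw [if_pos rfl, if_neg (Ne.symm hne')] at h2
      have hp : f C = p := by
        by_contra hc
        rw [if_neg hc] at h1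
        split_ifs at h1 <;> omega
      have hq : f D = q := by
        by_contra hc
        rw [if_neg hc] at h2
        split_ifs at h2 <;> omega
      rw [hp, hq]
      exact hpq
    · -- some element does not contain S
      push_neg at hP1
      obtain ⟨C₀, hC₀t, x₀, hx₀⟩ := hP1
      have T2 : ∀ C, C ∈ t → (∃ y, Multiset.count y (C : Multiset V) < Multiset.count y S) →
          ∃ z, z ≠ u ∧ z ≠ v ∧ ∀ x, Multiset.count x (C : Multiset V) + (if x = z then 1 else 0)
            = Multiset.count x S + (if x = u then 1 else 0) + (if x = v then 1 else 0) := by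
        intro C hCt hy
        obtain ⟨y, hy⟩ := hy
        have hCA : A ≠ C := by
          rintro rfl
          have := hS y
          split_ifs at this <;> omega
        have hCB : B ≠ C := by
          rintro rfl
          have := hB' y
          split_ifs at this <;> omega
        obtain ⟨p₁, q₁, hpq₁, h₁⟩ := superToken_adj_counts
          (ht (Finset.mem_coe.mpr hAt) (Finset.mem_coe.mpr hCt) hCA)
        obtain ⟨p₂, q₂, hpq₂, h₂⟩ := superToken_adj_counts
          (ht (Finset.mem_coe.mpr hBt) (Finset.mem_coe.mpr hCt) hCB)
        -- h₁ : ∀ x, cA x + [x=q₁] = cC x + [x=p₁]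
        have hp₁ : y = p₁ := by
          by_contra hc
          have h := h₁ y
          rw [hS y, if_neg hc] at h
          split_ifs at h <;> omega
        have hp₂ : y = p₂ := by
          by_contra hc
          have h := h₂ y
          rw [hB' y, if_neg hc] at h
          split_ifs at h <;> omega
        subst hp₁
        subst hp₂
        have hq₁ : v = q₁ := by
          by_contra hc
          have e1 := h₁ v
          have e2 := h₂ v
          rw [hS v, if_neg hc, if_neg (Ne.symm hune)] at e1
          rw [hB' v, if_pos rfl] at e2
          split_ifs at e1 e2 <;> omega
        refine ⟨y, ?_, ?_, ?_⟩
        · intro hyu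
          have h := h₁ y
          rw [hS y, ← hq₁, if_pos rfl] at h
          subst hyu
          rw [if_pos rfl] at h
          split_ifs at h <;> omega
        · intro hyv
          have h := h₁ y
          rw [hS y, ← hq₁, if_pos rfl] at h
          subst hyv
          rw [if_pos rfl] at h
          split_ifs at h <;> omega
        · intro x
          have h := h₁ x
          rw [hS x, ← hq₁] at h
          omega
      obtain ⟨z₀, hz₀u, hz₀v, hz₀⟩ := T2 C₀ hC₀t ⟨x₀, hx₀⟩
      have key2 : ∀ C ∈ t, ∀ x, Multiset.count x (C : Multiset V)
          ≤ Multiset.count x S + (if x = u then 1 else 0) + (if x = v then 1 else 0) := by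
        intro C hCt x
        by_cases hle : ∀ y, Multiset.count y S ≤ Multiset.count y (C : Multiset V)
        · obtain ⟨w, hw⟩ := type1 C hle
          by_cases hwu : w = u
          · rw [hw x, hwu]; split_ifs <;> omega
          by_cases hwv : w = v
          · rw [hw x, hwv]; split_ifs <;> omega
          · exfalso
            have hCC₀ : C ≠ C₀ := by
              rintro rfl
              have h := hz₀ z₀
              rw [if_pos rfl, if_neg (fun h => hz₀u h), if_neg (fun h => hz₀v h)] at h
              have := hle z₀
              omega
            obtain ⟨p, q, hpq, h⟩ := superToken_adj_counts
              (ht (Finset.mem_coe.mpr hCt) (Finset.mem_coe.mpr hC₀t) hCC₀)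
            -- h : ∀ x, cC x + [x=q] = cC₀ x + [x=p]
            have eu := h u
            have ev := h v
            have fu := hw u
            have fv := hw v
            have gu := hz₀ u
            have gv := hz₀ v
            rw [if_neg (Ne.symm hwu)] at fu
            rw [if_neg (Ne.symm hwv)] at fv
            rw [if_pos rfl, if_neg hune, if_neg (Ne.symm hz₀u)] at gu
            rw [if_pos rfl, if_neg (Ne.symm hune), if_neg (Ne.symm hz₀v)] at gv
            have hqu : u = q := by
              by_contra hc
              rw [if_neg hc] at eu
              split_ifs at eu <;> omega
            have hqv : v = q := by
              by_contra hc
              rw [if_neg hc] at ev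
              split_ifs at ev <;> omega
            exact hune (hqu.trans hqv.symm)
        · push_neg at hle
          obtain ⟨z, hzu, hzv, hz⟩ := T2 C hCt hle
          have := hz x
          split_ifs at this ⊢ <;> omega
      have type2 : ∀ C ∈ t, ∃ z, ∀ x,
          Multiset.count x (C : Multiset V) + (if x = z then 1 else 0)
            = Multiset.count x S + (if x = u then 1 else 0) + (if x = v then 1 else 0) := by
        intro C hCt
        set W : Multiset V := u ::ₘ v ::ₘ S with hWdef
        have hWc : ∀ x, Multiset.count x W
            = Multiset.count x S + (if x = u then 1 else 0) + (if x = v then 1 else 0) := by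
          intro x
          rw [hWdef]
          simp only [Multiset.count_cons]
          omega
        have hle : (C : Multiset V) ≤ W := by
          rw [Multiset.le_iff_count]
          intro x
          rw [hWc x]
          exact key2 C hCt x
        have h1 : Multiset.card (W - (C : Multiset V)) = 1 := by
          rw [Multiset.card_sub hle, hWdef]
          simp only [Multiset.card_cons]
          rw [hcardS, Sym.card_coe]
          omega
        obtain ⟨z, hz⟩ := Multiset.card_eq_one.mp h1
        refine ⟨z, fun x => ?_⟩
        have hc := congrArg (Multiset.count x) hz
        rw [Multiset.count_sub, Multiset.count_singleton] at hc
        have h2 := Multiset.le_iff_count.mp hle x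
        rw [← hWc x]
        omega
      set f : Sym V k → V := fun C =>
        if h : ∃ z, ∀ x, Multiset.count x (C : Multiset V) + (if x = z then 1 else 0)
            = Multiset.count x S + (if x = u then 1 else 0) + (if x = v then 1 else 0)
          then h.choose else u with hfdef
      have hfspec : ∀ C ∈ t, ∀ x,
          Multiset.count x (C : Multiset V) + (if x = f C then 1 else 0)
            = Multiset.count x S + (if x = u then 1 else 0) + (if x = v then 1 else 0) := by
        intro C hC
        have hex := type2 C hC
        have hfC : f C = hex.choose := by simp only [hfdef]; exact dif_pos hex
        rw [hfC]
        exact hex.choose_spec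
      have hinj : ∀ C ∈ t, ∀ D ∈ t, f C = f D → C = D := by
        intro C hC D hD hfeq
        apply Sym.coe_injective
        apply Multiset.ext.mpr
        intro x
        have h1 := hfspec C hC x
        have h2 := hfspec D hD x
        rw [hfeq] at h1
        omega
      apply clique_of_fun f hinj
      intro C hC D hD hne
      obtain ⟨p, q, hpq, h⟩ := superToken_adj_counts
        (ht (Finset.mem_coe.mpr hC) (Finset.mem_coe.mpr hD) hne)
      have hne' : f C ≠ f D := fun heq => hne (hinj C hC D hD heq)
      -- h : ∀ x, cC x + [x=q] = cD x + [x=p]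
      have h1 := h (f D)
      have c1 := hfspec C hC (f D)
      have d1 := hfspec D hD (f D)
      rw [if_pos rfl] at d1
      rw [if_neg (Ne.symm hne')] at c1
      have h2 := h (f C)
      have c2 := hfspec C hC (f C)
      have d2 := hfspec D hD (f C)
      rw [if_pos rfl] at c2
      rw [if_neg hne'] at d2
      have hp : f D = p := by
        by_contra hc
        rw [if_neg hc] at h1
        split_ifs at h1 <;> omega
      have hq : f C = q := by
        by_contra hc
        rw [if_neg hc] at h2
        split_ifs at h2 <;> omega
      rw [← hp] at hpq
      rw [hq]
      exact hpq.symm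

private lemma exists_superToken_clique {V : Type*} [Fintype V] [DecidableEq V]
    {G : SimpleGraph V} {k : ℕ} (hk : 1 ≤ k) (s : Finset V) (hs : G.IsClique ↑s) :
    ∃ t : Finset (Sym V k), (G.superToken k).IsClique ↑t ∧ t.card = s.card := by
  classical
  rcases Finset.eq_empty_or_nonempty s with rfl | ⟨a, ha⟩
  · exact ⟨∅, by simp, by simp⟩
  · have hcard : Multiset.card (Multiset.replicate (k - 1) a) = k - 1 :=
      Multiset.card_replicate _ _
    set g : V → Sym V k := fun v =>
      ⟨v ::ₘ Multiset.replicate (k - 1) a, by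
        rw [Multiset.card_cons, hcard]; omega⟩ with hgdef
    have hgcoe : ∀ v, (g v : Multiset V) = v ::ₘ Multiset.replicate (k - 1) a := fun v => rfl
    have hginj : Function.Injective g := by
      intro x y hxy
      have h2 : (g x : Multiset V) = (g y : Multiset V) := congrArg _ hxy
      rw [hgcoe, hgcoe] at h2
      exact (Multiset.cons_inj_left _).mp h2
    refine ⟨s.image g, ?_, ?_⟩
    · intro x hx y hy hxy
      simp only [Finset.coe_image, Set.mem_image, Finset.mem_coe] at hx hy
      obtain ⟨p, hp, rfl⟩ := hx
      obtain ⟨q, hq, rfl⟩ := hy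
      have hpq : p ≠ q := fun h => hxy (by rw [h])
      exact ⟨p, q, hs (Finset.mem_coe.mpr hp) (Finset.mem_coe.mpr hq) hpq,
        Multiset.replicate (k - 1) a, hgcoe p, hgcoe q⟩
    · exact Finset.card_image_of_injective s hginj

/-- For every graph `G` and every `k ≥ 1`, the clique number of the
`k`-supertoken graph `F_k(G)` equals the clique number of `G`. -/
theorem superToken_cliqueNum {V : Type*} [Fintype V] [DecidableEq V]
    (G : SimpleGraph V) (k : ℕ) (hk : 1 ≤ k) :
    (G.superToken k).cliqueNum = G.cliqueNum := by
  classical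
  apply le_antisymm
  · obtain ⟨t, htc⟩ := (G.superToken k).exists_isNClique_cliqueNum
    obtain ⟨s, hs, hcard⟩ := exists_clique_of_superToken_clique hk t htc.isClique
    calc (G.superToken k).cliqueNum = t.card := htc.card_eq.symm
      _ = s.card := hcard.symm
      _ ≤ G.cliqueNum := hs.card_le_cliqueNum
  · obtain ⟨s, hsc⟩ := G.exists_isNClique_cliqueNum
    obtain ⟨t, htcl, hcard⟩ := exists_superToken_clique (k := k) hk s hsc.isClique
    calc G.cliqueNum = s.card := hsc.card_eq.symm
      _ = t.card := hcard.symm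
      _ ≤ (G.superToken k).cliqueNum := htcl.card_le_cliqueNum
end

section
/- If a graph G has a proper vertex coloring with χ colors, then the k-supertoken graph F_k(G) also has a proper vertex coloring with at most χ colors; explicitly, coloring each multiset A by the sum of the colors of its elements modulo χ is a proper coloring of F_k(G). -/
/-- If `G` has a proper coloring `c` with `χ` colors (valued in
`ZMod χ`), then coloring each multiset `A` by the sum of the colors of its elements
(mod `χ`) is a proper coloring of `F_k(G)`; in particular `F_k(G)` is
`χ`-colorable. -/
theorem superToken_colorable {V : Type*} (G : SimpleGraph V) (k : ℕ) (hk : 1 ≤ k)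
    (χ : ℕ) (hχ : 0 < χ) (c : V → ZMod χ) (hc : ∀ u v : V, G.Adj u v → c u ≠ c v) :
    (∀ A B : Sym V k, (G.superToken k).Adj A B →
      ((A : Multiset V).map c).sum ≠ ((B : Multiset V).map c).sum) ∧
    (G.superToken k).Colorable χ := by
  have key : ∀ A B : Sym V k, (G.superToken k).Adj A B →
      ((A : Multiset V).map c).sum ≠ ((B : Multiset V).map c).sum := by
    rintro A B ⟨u, v, huv, S, hA, hB⟩ h
    rw [hA, hB, Multiset.map_cons, Multiset.map_cons, Multiset.sum_cons,
      Multiset.sum_cons] at h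
    exact hc u v huv (add_right_cancel h)
  refine ⟨key, ?_⟩
  haveI : NeZero χ := ⟨hχ.ne'⟩
  have C : (G.superToken k).Coloring (ZMod χ) :=
    SimpleGraph.Coloring.mk (fun A => ((A : Multiset V).map c).sum)
      (fun {A B} h => key A B h)
  simpa [ZMod.card] using C.colorable
end

section
/- For every graph G and every k ≥ 1, the chromatic number of the k-supertoken graph F_k(G) equals the chromatic number of G. -/
theorem superToken_chromaticNumber {V : Type*} [Fintype V] [DecidableEq V]
    (G : SimpleGraph V) (k : ℕ) (hk : 1 ≤ k) :
    (G.superToken k).chromaticNumber = G.chromaticNumber := by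
  have key : ∀ n, (G.superToken k).Colorable n ↔ G.Colorable n := by
    intro n
    constructor
    · rintro ⟨C⟩
      by_cases hV : Nonempty V
      · obtain ⟨w⟩ := hV
        refine ⟨⟨fun x => C ⟨x ::ₘ Multiset.replicate (k-1) w, by
            simp [Nat.sub_add_cancel hk]⟩, ?_⟩⟩
        intro u v huv
        exact C.valid ⟨u, v, huv, Multiset.replicate (k-1) w, rfl, rfl⟩
      · have : IsEmpty V := not_nonempty_iff.mp hV
        exact SimpleGraph.Colorable.of_isEmpty (G := G) n
    · rintro ⟨C⟩
      rcases n with _ | m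
      · have hVe : IsEmpty V := ⟨fun x => (C x).elim0⟩
        have : IsEmpty (Sym V k) := ⟨fun A => by
          have hc : Multiset.card (A : Multiset V) = k := A.2
          obtain ⟨x, -⟩ := Multiset.exists_mem_of_ne_zero
            (fun h0 : (A : Multiset V) = 0 => by rw [h0] at hc; simp at hc; omega)
          exact hVe.false x⟩
        exact SimpleGraph.Colorable.of_isEmpty (G := G.superToken k) 0
      · have coloring : (G.superToken k).Coloring (ZMod (m+1)) := by
          refine ⟨fun A => ((A : Multiset V).map
            fun x => (((C x : Fin (m+1)) : ℕ) : ZMod (m+1))).sum, ?_⟩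
          rintro A B ⟨u, v, huv, S, hA, hB⟩ h
          rw [hA, hB, Multiset.map_cons, Multiset.map_cons,
            Multiset.sum_cons, Multiset.sum_cons, add_right_cancel_iff] at h
          have := congrArg ZMod.val h
          rw [ZMod.val_natCast_of_lt (C u).isLt,
            ZMod.val_natCast_of_lt (C v).isLt] at this
          exact C.valid huv (Fin.val_injective this)
        have h2 := coloring.colorable
        simpa [ZMod.card] using h2
  rw [SimpleGraph.chromaticNumber_eq_biInf, SimpleGraph.chromaticNumber_eq_biInf]
  exact iInf_congr fun n => by rw [Set.mem_setOf_eq, Set.mem_setOf_eq, key n]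
end

section
/- For every graph G with n vertices and diameter d, the diameter of the k-supertoken graph F_k(G) equals k·d. -/
section Aux

open SimpleGraph

variable {V : Type*} [Fintype V] [DecidableEq V] {G : SimpleGraph V}

omit [Fintype V] [DecidableEq V] in
lemma superToken_tokenAdj {k : ℕ} (S : Multiset V) {u w : V} (h : G.Adj u w)
    (h1 : ((u ::ₘ S : Multiset V)).card = k) (h2 : ((w ::ₘ S : Multiset V)).card = k) :
    (G.superToken k).Adj ⟨u ::ₘ S, h1⟩ ⟨w ::ₘ S, h2⟩ :=
  ⟨u, w, h, S, rfl, rfl⟩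

omit [Fintype V] [DecidableEq V] in
lemma superToken_tokenWalk {k : ℕ} (S : Multiset V) :
    ∀ {u v : V} (p : G.Walk u v) (h1 : ((u ::ₘ S : Multiset V)).card = k)
      (h2 : ((v ::ₘ S : Multiset V)).card = k),
    ∃ q : (G.superToken k).Walk ⟨u ::ₘ S, h1⟩ ⟨v ::ₘ S, h2⟩, q.length = p.length
  | _, _, SimpleGraph.Walk.nil, h1, h2 => ⟨SimpleGraph.Walk.nil, rfl⟩
  | _, _, SimpleGraph.Walk.cons h p, h1, h2 => by
    obtain ⟨q, hq⟩ := superToken_tokenWalk S p (by simpa using h1) h2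
    exact ⟨SimpleGraph.Walk.cons (superToken_tokenAdj S h h1 (by simpa using h1)) q,
      congrArg (· + 1) hq⟩

omit [DecidableEq V] in
lemma ediam_ne_top_of_conn (hG : G.Connected) : G.ediam ≠ ⊤ := by
  have : Nonempty V := hG.nonempty
  obtain ⟨u, v, huv⟩ := SimpleGraph.exists_edist_eq_ediam_of_finite (G := G)
  rw [← huv]
  exact (SimpleGraph.edist_ne_top_iff_reachable).mpr (hG u v)

lemma superToken_walk_le (hG : G.Connected) {k : ℕ} :
    ∀ (n : ℕ) (A B : Sym V k), k - ((A : Multiset V) ∩ (B : Multiset V)).card ≤ n →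
    ∃ q : (G.superToken k).Walk A B, q.length ≤ n * G.diam := by
  intro n
  induction n with
  | zero =>
    intro A B h
    have hcA : ((A : Multiset V)).card = k := A.2
    have hcB : ((B : Multiset V)).card = k := B.2
    have hci : ((A : Multiset V) ∩ (B : Multiset V)).card ≤ k := by
      have := Multiset.card_le_card (Multiset.inter_le_left : (A : Multiset V) ∩ (B : Multiset V) ≤ A)
      omega
    have h1 : (A : Multiset V) ∩ (B : Multiset V) = (A : Multiset V) :=
      Multiset.eq_of_le_of_card_le Multiset.inter_le_left (by omega)
    have h2 : (A : Multiset V) ∩ (B : Multiset V) = (B : Multiset V) :=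
      Multiset.eq_of_le_of_card_le Multiset.inter_le_right (by omega)
    have : A = B := Subtype.ext (h1.symm.trans h2)
    subst this
    exact ⟨SimpleGraph.Walk.nil, by simp⟩
  | succ n ih =>
    intro A B h
    by_cases hAB : A = B
    · subst hAB; exact ⟨SimpleGraph.Walk.nil, by simp⟩
    · have hcA : ((A : Multiset V)).card = k := A.2
      have hcB : ((B : Multiset V)).card = k := B.2
      have hne : (A : Multiset V) ≠ (B : Multiset V) := fun hc => hAB (Subtype.ext hc)
      have ha : ∃ a, ((B : Multiset V)).count a < ((A : Multiset V)).count a := by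
        by_contra hc
        push_neg at hc
        exact hne (Multiset.eq_of_le_of_card_le (Multiset.le_iff_count.mpr hc) (by omega))
      have hb : ∃ b, ((A : Multiset V)).count b < ((B : Multiset V)).count b := by
        by_contra hc
        push_neg at hc
        exact hne (Multiset.eq_of_le_of_card_le (Multiset.le_iff_count.mpr hc) (by omega)).symm
      obtain ⟨a, ha⟩ := ha
      obtain ⟨b, hb⟩ := hb
      have hab : a ≠ b := by rintro rfl; omega
      have haA : a ∈ (A : Multiset V) := Multiset.count_pos.mp (by omega)
      set S : Multiset V := (A : Multiset V).erase a with hS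
      have hcons : (A : Multiset V) = a ::ₘ S := (Multiset.cons_erase haA).symm
      have hScard : S.card + 1 = k := by
        rw [hS, Multiset.card_erase_add_one haA, hcA]
      have hCcard : ((b ::ₘ S : Multiset V)).card = k := by simpa using hScard
      have hAcard : ((a ::ₘ S : Multiset V)).card = k := by simpa using hScard
      -- walk from A to C := ⟨b ::ₘ S, _⟩
      obtain ⟨p, hp⟩ := hG.exists_walk_length_eq_dist a b
      obtain ⟨q1, hq1⟩ := superToken_tokenWalk S p hAcard hCcard
      have hq1' : q1.length ≤ G.diam := by
        rw [hq1, hp]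
        exact SimpleGraph.dist_le_diam (ediam_ne_top_of_conn hG)
      -- measure decrease
      have hkey : b ::ₘ ((A : Multiset V) ∩ (B : Multiset V)) ≤
          ((b ::ₘ S : Multiset V) ∩ (B : Multiset V)) := by
        rw [Multiset.le_iff_count]
        intro x
        rw [Multiset.count_cons, Multiset.count_inter, Multiset.count_inter,
          Multiset.count_cons]
        rcases eq_or_ne x a with rfl | hxa
        · rw [if_neg hab, hS, Multiset.count_erase_self]
          omega
        · rw [hS, Multiset.count_erase_of_ne hxa]
          rcases eq_or_ne x b with rfl | hxb
          · rw [if_pos rfl]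
            omega
          · rw [if_neg hxb]
            omega
      have hmeas : k - (((b ::ₘ S : Multiset V)) ∩ (B : Multiset V)).card ≤ n := by
        have h1 := Multiset.card_le_card hkey
        simp only [Multiset.card_cons] at h1
        have h2 : (((b ::ₘ S : Multiset V)) ∩ (B : Multiset V)).card ≤ k := by
          have := Multiset.card_le_card
            (Multiset.inter_le_right : (b ::ₘ S : Multiset V) ∩ (B : Multiset V) ≤ B)
          omega
        omega
      obtain ⟨q2, hq2⟩ := ih ⟨b ::ₘ S, hCcard⟩ B hmeas
      refine ⟨(q1.copy (show (⟨a ::ₘ S, hAcard⟩ : Sym V k) = A from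
        Subtype.ext hcons.symm) rfl).append q2, ?_⟩
      refine (SimpleGraph.Walk.length_append _ _).trans_le ?_
      refine (congrArg (· + q2.length) (SimpleGraph.Walk.length_copy _ _ _)).trans_le ?_
      calc q1.length + q2.length ≤ G.diam + n * G.diam := by omega
        _ = (n + 1) * G.diam := by ring

omit [Fintype V] [DecidableEq V] in
lemma superToken_phi_adj (hG : G.Connected) {k : ℕ} (v : V) {X Y : Sym V k}
    (hadj : (G.superToken k).Adj X Y) :
    (((X : Multiset V)).map (fun z => G.dist z v)).sum ≤
      (((Y : Multiset V)).map (fun z => G.dist z v)).sum + 1 := by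
  obtain ⟨x, y, hxy, T, hX, hY⟩ := hadj
  rw [hX, hY, Multiset.map_cons, Multiset.map_cons, Multiset.sum_cons, Multiset.sum_cons]
  have h1 : G.dist x v ≤ G.dist y v + 1 := by
    have := hG.dist_triangle (u := x) (v := y) (w := v)
    rw [SimpleGraph.dist_eq_one_iff_adj.mpr hxy] at this
    omega
  omega

omit [Fintype V] [DecidableEq V] in
lemma superToken_phi_walk (hG : G.Connected) {k : ℕ} (v : V) {X Y : Sym V k}
    (p : (G.superToken k).Walk X Y) :
    (((X : Multiset V)).map (fun z => G.dist z v)).sum ≤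
      (((Y : Multiset V)).map (fun z => G.dist z v)).sum + p.length := by
  induction p with
  | nil => simp
  | cons hadj p ihp =>
    have := superToken_phi_adj hG v hadj
    rw [SimpleGraph.Walk.length_cons]
    omega

end Aux

/-- For every connected graph `G` and `k ≥ 1`, the diameter of the
`k`-supertoken graph `F_k(G)` equals `k` times the diameter of `G`. -/
theorem superToken_diam {V : Type*} [Fintype V] [DecidableEq V]
    (G : SimpleGraph V) (hG : G.Connected) (k : ℕ) (hk : 1 ≤ k) :
    (G.superToken k).diam = k * G.diam := by
  have hV : Nonempty V := hG.nonempty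
  have hup : ∀ A B : Sym V k, (G.superToken k).edist A B ≤ (k * G.diam : ℕ) := by
    intro A B
    obtain ⟨q, hq⟩ := superToken_walk_le hG k A B (by omega)
    exact le_trans (SimpleGraph.edist_le q) (by exact_mod_cast hq)
  have hediam : (G.superToken k).ediam ≤ (k * G.diam : ℕ) :=
    SimpleGraph.ediam_le_of_edist_le hup
  have hnetop : (G.superToken k).ediam ≠ ⊤ :=
    ne_top_of_le_ne_top (ENat.coe_ne_top _) hediam
  have hdiam_le : (G.superToken k).diam ≤ k * G.diam := by
    have := ENat.toNat_le_toNat hediam (ENat.coe_ne_top _)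
    simpa [SimpleGraph.diam] using this
  obtain ⟨u, v, huv⟩ := SimpleGraph.exists_dist_eq_diam (G := G)
  have hAc : (Multiset.replicate k u).card = k := by simp
  have hBc : (Multiset.replicate k v).card = k := by simp
  set A : Sym V k := ⟨Multiset.replicate k u, hAc⟩ with hA
  set B : Sym V k := ⟨Multiset.replicate k v, hBc⟩ with hB
  have hreach : (G.superToken k).Reachable A B := by
    obtain ⟨q, _⟩ := superToken_walk_le hG k A B (by omega)
    exact ⟨q⟩
  obtain ⟨p, hp⟩ := hreach.exists_walk_length_eq_dist
  have hphi := superToken_phi_walk hG v p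
  have hPhiA : (((A : Multiset V)).map (fun z => G.dist z v)).sum = k * G.diam := by
    rw [hA, Sym.coe_mk, Multiset.map_replicate, Multiset.sum_replicate, huv]
    simp [mul_comm]
  have hPhiB : (((B : Multiset V)).map (fun z => G.dist z v)).sum = 0 := by
    rw [hB, Sym.coe_mk, Multiset.map_replicate, Multiset.sum_replicate]
    simp
  rw [hPhiA, hPhiB, hp] at hphi
  have hlast := SimpleGraph.dist_le_diam (G := G.superToken k) hnetop (u := A) (v := B)
  omega
end

section
/- The independence number of the 2-supertoken graph of the cycle C_n equals r(n+2) if n = 4r or n = 4r+1, and equals (r+1)n if n = 4r+2 or n = 4r+3. -/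
namespace STAux

open Fin.NatCast

variable {n : ℕ}

def e (i j : Fin n) : Sym (Fin n) 2 := ⟨{i, j}, rfl⟩

lemma coe_e (i j : Fin n) : (e i j : Multiset (Fin n)) = {i, j} := rfl

lemma e_comm (i j : Fin n) : e i j = e j i := Subtype.ext (Multiset.pair_comm i j)

lemma cons_pair {u : Fin n} {S : Multiset (Fin n)} {a b : Fin n}
    (h : ({a, b} : Multiset (Fin n)) = u ::ₘ S) :
    (u = a ∧ S = {b}) ∨ (u = b ∧ S = {a}) := by
  rw [Multiset.insert_eq_cons, Multiset.cons_eq_cons] at h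
  rcases h with ⟨h1, h2⟩ | ⟨h1, cs, h2, h3⟩
  · exact Or.inl ⟨h1.symm, h2.symm⟩
  · have hcs : cs = 0 := by
      rw [← Multiset.card_eq_zero]
      have := congrArg Multiset.card h2
      rw [Multiset.card_singleton, Multiset.card_cons] at this
      omega
    subst hcs
    simp only [Multiset.cons_zero, Multiset.singleton_inj] at h2 h3
    exact Or.inr ⟨h2.symm, by rw [h3]⟩

lemma pair_eq {a b c d : Fin n} :
    ({a, b} : Multiset (Fin n)) = {c, d} ↔ (a = c ∧ b = d) ∨ (a = d ∧ b = c) := by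
  constructor
  · intro h
    have h' : ({a, b} : Multiset (Fin n)) = c ::ₘ {d} := by
      rw [h]; rfl
    rcases cons_pair h' with ⟨h1, h2⟩ | ⟨h1, h2⟩
    · exact Or.inl ⟨h1.symm, (Multiset.singleton_inj.mp h2.symm)⟩
    · exact Or.inr ⟨(Multiset.singleton_inj.mp h2.symm), h1.symm⟩
  · rintro (⟨rfl, rfl⟩ | ⟨rfl, rfl⟩)
    · rfl
    · exact Multiset.pair_comm a b

lemma e_eq_e {a b c d : Fin n} : e a b = e c d ↔ (a = c ∧ b = d) ∨ (a = d ∧ b = c) := by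
  rw [← Sym.coe_inj]; exact pair_eq

lemma exists_rep (A : Sym (Fin n) 2) : ∃ i j, A = e i j := by
  obtain ⟨i, j, h⟩ := Multiset.card_eq_two.mp A.2
  exact ⟨i, j, Subtype.ext h⟩

lemma adj_iff {a b c d : Fin n} :
    ((SimpleGraph.cycleGraph n).superToken 2).Adj (e a b) (e c d) ↔
      ((SimpleGraph.cycleGraph n).Adj a c ∧ b = d) ∨
      ((SimpleGraph.cycleGraph n).Adj a d ∧ b = c) ∨
      ((SimpleGraph.cycleGraph n).Adj b c ∧ a = d) ∨
      ((SimpleGraph.cycleGraph n).Adj b d ∧ a = c) := by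
  constructor
  · rintro ⟨u, v, huv, S, hA, hB⟩
    rw [coe_e] at hA hB
    rcases cons_pair hA with ⟨rfl, rfl⟩ | ⟨rfl, rfl⟩ <;>
      rcases cons_pair hB with ⟨rfl, hS⟩ | ⟨rfl, hS⟩ <;>
      rw [Multiset.singleton_inj] at hS
    · exact Or.inl ⟨huv, hS⟩
    · exact Or.inr (Or.inl ⟨huv, hS⟩)
    · exact Or.inr (Or.inr (Or.inl ⟨huv, hS⟩))
    · exact Or.inr (Or.inr (Or.inr ⟨huv, hS⟩))
  · rintro (⟨h, rfl⟩ | ⟨h, rfl⟩ | ⟨h, rfl⟩ | ⟨h, rfl⟩)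
    · exact ⟨a, c, h, {b}, rfl, rfl⟩
    · exact ⟨a, d, h, {b}, rfl, Multiset.pair_comm b d⟩
    · exact ⟨b, c, h, {a}, Multiset.pair_comm a b, rfl⟩
    · exact ⟨b, d, h, {a}, Multiset.pair_comm a b, Multiset.pair_comm a d⟩

lemma mod2 {u : ℕ} (hn : 0 < n) (h : u < 2 * n) : u % n = u ∨ u % n + n = u := by
  rcases Nat.lt_or_ge u n with h' | h'
  · exact Or.inl (Nat.mod_eq_of_lt h')
  · right
    rw [Nat.mod_eq_sub_mod h', Nat.mod_eq_of_lt (by omega)]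
    omega

lemma cadj_iff (hn : 2 ≤ n) {x y : Fin n} :
    (SimpleGraph.cycleGraph n).Adj x y ↔
      ((x.val + 1) % n = y.val ∨ (y.val + 1) % n = x.val) := by
  have hx := x.isLt
  have hy := y.isLt
  have hs1 : (x - y).val = (n - y.val + x.val) % n := by rw [Fin.sub_def]
  have hs2 : (y - x).val = (n - x.val + y.val) % n := by rw [Fin.sub_def]
  rw [SimpleGraph.cycleGraph_adj', hs1, hs2]
  have b3 : (x.val + 1) % n < n := Nat.mod_lt _ (by omega)
  have b4 : (y.val + 1) % n < n := Nat.mod_lt _ (by omega)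
  rcases mod2 (show 0 < n by omega) (show n - y.val + x.val < 2 * n by omega) with h1 | h1 <;>
  rcases mod2 (show 0 < n by omega) (show n - x.val + y.val < 2 * n by omega) with h2 | h2 <;>
  rcases mod2 (show 0 < n by omega) (show x.val + 1 < 2 * n by omega) with h3 | h3 <;>
  rcases mod2 (show 0 < n by omega) (show y.val + 1 < 2 * n by omega) with h4 | h4 <;>
  omega

section casts
variable [NeZero n]

/-- master lemma 1: two "stripes" of even offsets are non-adjacent. -/
lemma stripes (hn : 2 ≤ n) {x z a b : ℕ} (hx : x < n) (hz : z < n)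
    (hab : 2 * a + 2 * b + 1 < n) :
    ¬ ((SimpleGraph.cycleGraph n).superToken 2).Adj
      (e (x : Fin n) ((x + 2 * a : ℕ) : Fin n))
      (e (z : Fin n) ((z + 2 * b : ℕ) : Fin n)) := by
  intro h
  rw [adj_iff] at h
  simp only [cadj_iff hn, Fin.ext_iff, Fin.val_natCast,
    Nat.mod_eq_of_lt hx, Nat.mod_eq_of_lt hz] at h
  have e1 := mod2 (show 0 < n by omega) (show x + 2 * a < 2 * n by omega)
  have e2 := mod2 (show 0 < n by omega) (show z + 2 * b < 2 * n by omega)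
  have e3 := mod2 (show 0 < n by omega) (show x + 1 < 2 * n by omega)
  have e4 := mod2 (show 0 < n by omega) (show z + 1 < 2 * n by omega)
  have b1 : (x + 2 * a) % n < n := Nat.mod_lt _ (by omega)
  have b2 : (z + 2 * b) % n < n := Nat.mod_lt _ (by omega)
  have e5 := mod2 (show 0 < n by omega) (show (x + 2 * a) % n + 1 < 2 * n by omega)
  have e6 := mod2 (show 0 < n by omega) (show (z + 2 * b) % n + 1 < 2 * n by omega)
  omega

/-- master lemma 2: equal offsets, non-wrapping, distinct sources. -/
lemma stripes2 (hn : 2 ≤ n) {x z c : ℕ} (hx : x < n) (hz : z < n)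
    (hxc : x + c < n) (hzc : z + c < n)
    (h1 : x + c ≠ z) (h2 : z + c ≠ x) :
    ¬ ((SimpleGraph.cycleGraph n).superToken 2).Adj
      (e (x : Fin n) ((x + c : ℕ) : Fin n))
      (e (z : Fin n) ((z + c : ℕ) : Fin n)) := by
  intro h
  rw [adj_iff] at h
  simp only [cadj_iff hn, Fin.ext_iff, Fin.val_natCast,
    Nat.mod_eq_of_lt hx, Nat.mod_eq_of_lt hz,
    Nat.mod_eq_of_lt hxc, Nat.mod_eq_of_lt hzc] at h
  have e3 := mod2 (show 0 < n by omega) (show x + 1 < 2 * n by omega)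
  have e4 := mod2 (show 0 < n by omega) (show z + 1 < 2 * n by omega)
  have e5 := mod2 (show 0 < n by omega) (show x + c + 1 < 2 * n by omega)
  have e6 := mod2 (show 0 < n by omega) (show z + c + 1 < 2 * n by omega)
  omega

/-- cast pair equality in ℕ terms -/
lemma E_eq_E {x y z w : ℕ} :
    e (x : Fin n) (y : Fin n) = e (z : Fin n) (w : Fin n) ↔
      (x % n = z % n ∧ y % n = w % n) ∨ (x % n = w % n ∧ y % n = z % n) := by
  rw [e_eq_e]
  simp only [Fin.ext_iff, Fin.val_natCast]

end casts
end STAux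

namespace STAux
variable {n : ℕ}

lemma cycle_indep_bound (hn : 2 ≤ n) (T : Finset (Fin n))
    (hT : ∀ j ∈ T, ∀ k ∈ T, ¬ (SimpleGraph.cycleGraph n).Adj j k) :
    T.card ≤ n / 2 := by
  classical
  set g : Fin n → Fin n := fun j => ⟨(j.val + 1) % n, Nat.mod_lt _ (by omega)⟩ with hg
  have hginj : Function.Injective g := by
    intro j k h
    rw [Fin.ext_iff] at h ⊢
    simp only [hg] at h
    have hj := j.isLt; have hk := k.isLt
    rcases mod2 (show 0 < n by omega) (show j.val + 1 < 2 * n by omega) with h1 | h1 <;>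
    rcases mod2 (show 0 < n by omega) (show k.val + 1 < 2 * n by omega) with h2 | h2 <;> omega
  have hdisj : Disjoint T (T.image g) := by
    rw [Finset.disjoint_right]
    intro j hj hjT
    obtain ⟨k, hk, hkj⟩ := Finset.mem_image.mp hj
    apply hT k hk j hjT
    rw [cadj_iff hn]
    left
    rw [← hkj]
  have hle : T.card + T.card ≤ n := by
    calc T.card + T.card = T.card + (T.image g).card := by
          rw [Finset.card_image_of_injective T hginj]
      _ = (T ∪ T.image g).card := (Finset.card_union_of_disjoint hdisj).symm
      _ ≤ (Finset.univ : Finset (Fin n)).card := Finset.card_le_univ _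
      _ = n := by simp
  omega

lemma row_eq (i : Fin n) (s : Finset (Sym (Fin n) 2)) :
    s.filter (fun (A : Sym (Fin n) 2) => i ∈ (A : Multiset (Fin n))) =
      (Finset.univ.filter (fun j => e i j ∈ s)).image (e i) := by
  classical
  ext A
  simp only [Finset.mem_filter, Finset.mem_image, Finset.mem_univ, true_and]
  constructor
  · rintro ⟨hAs, hiA⟩
    obtain ⟨a, b, rfl⟩ := exists_rep A
    rw [coe_e] at hiA
    rcases (by simpa [Multiset.insert_eq_cons, Multiset.mem_cons, Multiset.mem_singleton]
        using hiA : i = a ∨ i = b) with rfl | rfl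
    · exact ⟨b, hAs, rfl⟩
    · exact ⟨a, by rwa [e_comm], e_comm i a⟩
  · rintro ⟨j, hj, rfl⟩
    refine ⟨hj, ?_⟩
    rw [coe_e]
    simp [Multiset.insert_eq_cons]

lemma double_count (s : Finset (Sym (Fin n) 2)) :
    (∑ i : Fin n, (s.filter (fun (A : Sym (Fin n) 2) => i ∈ (A : Multiset (Fin n)))).card)
      + (s.filter (fun (A : Sym (Fin n) 2) => ∃ i, A = e i i)).card = 2 * s.card := by
  classical
  simp only [Finset.card_filter]
  rw [Finset.sum_comm, ← Finset.sum_add_distrib]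
  have key : ∀ A ∈ s,
      ((∑ i : Fin n, if i ∈ (A : Multiset (Fin n)) then 1 else 0)
        + if (∃ i, A = e i i) then 1 else 0) = 2 := by
    intro A _
    obtain ⟨a, b, rfl⟩ := exists_rep A
    have hsum : (∑ i : Fin n, if i ∈ ((e a b : Sym (Fin n) 2) : Multiset (Fin n)) then 1 else 0)
        = ({a, b} : Finset (Fin n)).card := by
      rw [← Finset.card_filter]
      congr 1
      ext x
      simp [coe_e, Multiset.insert_eq_cons, Multiset.mem_cons, Multiset.mem_singleton]
    rw [hsum]
    by_cases hab : a = b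
    · subst hab
      rw [if_pos ⟨a, rfl⟩]
      simp
    · rw [Finset.card_pair hab, if_neg]
      rintro ⟨i, hi⟩
      rcases e_eq_e.mp hi with ⟨rfl, rfl⟩ | ⟨rfl, rfl⟩ <;> exact hab rfl
  rw [Finset.sum_congr rfl key, Finset.sum_const, smul_eq_mul, mul_comm]

lemma diag_le (s : Finset (Sym (Fin n) 2)) :
    (s.filter (fun (A : Sym (Fin n) 2) => ∃ i, A = e i i)).card ≤ n := by
  classical
  calc (s.filter (fun (A : Sym (Fin n) 2) => ∃ i, A = e i i)).card
      ≤ ((Finset.univ : Finset (Fin n)).image (fun i => e i i)).card := by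
        apply Finset.card_le_card
        intro A hA
        obtain ⟨-, i, rfl⟩ := Finset.mem_filter.mp hA
        exact Finset.mem_image_of_mem _ (Finset.mem_univ i)
    _ ≤ (Finset.univ : Finset (Fin n)).card := Finset.card_image_le
    _ = n := by simp

lemma card_le (hn : 2 ≤ n) (s : Finset (Sym (Fin n) 2))
    (hs : ∀ A ∈ s, ∀ B ∈ s, ¬ ((SimpleGraph.cycleGraph n).superToken 2).Adj A B) :
    2 * s.card ≤ n * (n / 2) + n := by
  classical
  have h1 := double_count s
  have h2 : (∑ i : Fin n, (s.filter (fun (A : Sym (Fin n) 2) => i ∈ (A : Multiset (Fin n)))).card)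
      ≤ n * (n / 2) := by
    calc (∑ i : Fin n, (s.filter (fun (A : Sym (Fin n) 2) => i ∈ (A : Multiset (Fin n)))).card)
        ≤ ∑ _i : Fin n, (n / 2) := by
          apply Finset.sum_le_sum
          intro i _
          rw [row_eq i s]
          calc ((Finset.univ.filter (fun j => e i j ∈ s)).image (e i)).card
              ≤ (Finset.univ.filter (fun j => e i j ∈ s)).card := Finset.card_image_le
            _ ≤ n / 2 := by
                apply cycle_indep_bound hn
                intro j hj k hk hadj
                rw [Finset.mem_filter] at hj hk
                exact hs _ hj.2 _ hk.2 (adj_iff.mpr (Or.inr (Or.inr (Or.inr ⟨hadj, rfl⟩))))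
      _ = n * (n / 2) := by simp [Finset.sum_const, mul_comm]
  have h3 := diag_le s
  omega

end STAux


open STAux
open Fin.NatCast

/-- The independence number of the 2-supertoken graph of the cycle
`C_n` (`n ≥ 2`) equals `r(n+2)` if `n = 4r` or `n = 4r+1`, and `(r+1)n` if
`n = 4r+2` or `n = 4r+3`. -/
theorem superToken_cycle_indepNum (n r : ℕ) (hn : 2 ≤ n) :
    ((n = 4 * r ∨ n = 4 * r + 1) →
      IsGreatest {m : ℕ | ∃ s : Finset (Sym (Fin n) 2),
        (∀ A ∈ s, ∀ B ∈ s, ¬ ((SimpleGraph.cycleGraph n).superToken 2).Adj A B) ∧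
        s.card = m} (r * (n + 2))) ∧
    ((n = 4 * r + 2 ∨ n = 4 * r + 3) →
      IsGreatest {m : ℕ | ∃ s : Finset (Sym (Fin n) 2),
        (∀ A ∈ s, ∀ B ∈ s, ¬ ((SimpleGraph.cycleGraph n).superToken 2).Adj A B) ∧
        s.card = m} ((r + 1) * n)) := by
  constructor
  · intro hc
    have hn4 : 4 * r ≤ n ∧ n ≤ 4 * r + 1 := by omega
    have hr : 1 ≤ r := by omega
    haveI : NeZero n := ⟨by omega⟩
    classical
    constructor
    · -- membership: explicit independent set of size r * (n + 2)
      set s1 := (Finset.range n ×ˢ Finset.range r).image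
          (fun p : ℕ × ℕ => e (p.1 : Fin n) ((p.1 + 2 * p.2 : ℕ) : Fin n)) with hs1
      set s2 := (Finset.range (2 * r)).image
          (fun i : ℕ => e (i : Fin n) ((i + 2 * r : ℕ) : Fin n)) with hs2
      have hcard1 : s1.card = n * r := by
        rw [hs1, Finset.card_image_of_injOn, Finset.card_product, Finset.card_range,
          Finset.card_range]
        rintro ⟨p1, p2⟩ hp ⟨q1, q2⟩ hq h
        simp only [Finset.mem_coe, Finset.mem_product, Finset.mem_range] at hp hq
        dsimp only at h
        rw [E_eq_E] at h
        simp only [Prod.mk.injEq]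
        have m1 := Nat.mod_eq_of_lt hp.1
        have m2 := Nat.mod_eq_of_lt hq.1
        have e1 := mod2 (show 0 < n by omega) (show p1 + 2 * p2 < 2 * n by omega)
        have e2 := mod2 (show 0 < n by omega) (show q1 + 2 * q2 < 2 * n by omega)
        omega
      have hcard2 : s2.card = 2 * r := by
        rw [hs2, Finset.card_image_of_injOn, Finset.card_range]
        intro i hi j hj h
        simp only [Finset.mem_coe, Finset.mem_range] at hi hj
        rw [E_eq_E] at h
        have m1 := Nat.mod_eq_of_lt (show i < n by omega)
        have m2 := Nat.mod_eq_of_lt (show j < n by omega)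
        have m3 := Nat.mod_eq_of_lt (show i + 2 * r < n by omega)
        have m4 := Nat.mod_eq_of_lt (show j + 2 * r < n by omega)
        omega
      have hdisj : Disjoint s1 s2 := by
        rw [Finset.disjoint_left]
        rintro A h1 h2
        obtain ⟨⟨p1, p2⟩, hp, rfl⟩ := Finset.mem_image.mp h1
        obtain ⟨i, hi, hEq⟩ := Finset.mem_image.mp h2
        simp only [Finset.mem_product, Finset.mem_range] at hp
        rw [Finset.mem_range] at hi
        dsimp only at hEq
        rw [E_eq_E] at hEq
        have m1 := Nat.mod_eq_of_lt hp.1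
        have m2 := Nat.mod_eq_of_lt (show i < n by omega)
        have m3 := Nat.mod_eq_of_lt (show i + 2 * r < n by omega)
        have e1 := mod2 (show 0 < n by omega) (show p1 + 2 * p2 < 2 * n by omega)
        omega
      refine ⟨s1 ∪ s2, ?_, ?_⟩
      · intro A hA B hB
        rw [Finset.mem_union] at hA hB
        rcases hA with hA | hA <;> rcases hB with hB | hB
        · obtain ⟨⟨p1, p2⟩, hp, rfl⟩ := Finset.mem_image.mp hA
          obtain ⟨⟨q1, q2⟩, hq, rfl⟩ := Finset.mem_image.mp hB
          simp only [Finset.mem_product, Finset.mem_range] at hp hq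
          exact stripes (by omega) hp.1 hq.1 (by omega)
        · obtain ⟨⟨p1, p2⟩, hp, rfl⟩ := Finset.mem_image.mp hA
          obtain ⟨i, hi, rfl⟩ := Finset.mem_image.mp hB
          simp only [Finset.mem_product, Finset.mem_range] at hp
          rw [Finset.mem_range] at hi
          exact stripes (by omega) hp.1 (by omega) (by omega)
        · obtain ⟨i, hi, rfl⟩ := Finset.mem_image.mp hA
          obtain ⟨⟨q1, q2⟩, hq, rfl⟩ := Finset.mem_image.mp hB
          simp only [Finset.mem_product, Finset.mem_range] at hq
          rw [Finset.mem_range] at hi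
          exact stripes (by omega) (by omega) hq.1 (by omega)
        · obtain ⟨i, hi, rfl⟩ := Finset.mem_image.mp hA
          obtain ⟨j, hj, rfl⟩ := Finset.mem_image.mp hB
          rw [Finset.mem_range] at hi hj
          exact stripes2 (by omega) (by omega) (by omega) (by omega) (by omega)
            (by omega) (by omega)
      · rw [Finset.card_union_of_disjoint hdisj, hcard1, hcard2]
        ring
    · rintro m ⟨s, hs, rfl⟩
      have h2 := card_le (by omega) s hs
      rcases hc with rfl | rfl
      · have hdiv : (4 * r) / 2 = 2 * r := by omega
        rw [hdiv] at h2
        have hring : 4 * r * (2 * r) + 4 * r = 2 * (r * (4 * r + 2)) := by ring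
        rw [hring] at h2
        generalize hY : r * (4 * r + 2) = Y at h2 ⊢
        omega
      · have hdiv : (4 * r + 1) / 2 = 2 * r := by omega
        rw [hdiv] at h2
        have hring : (4 * r + 1) * (2 * r) + (4 * r + 1) = 2 * (r * (4 * r + 1 + 2)) + 1 := by
          ring
        rw [hring] at h2
        generalize hY : r * (4 * r + 1 + 2) = Y at h2 ⊢
        omega
  · intro hc
    have hn4 : 4 * r + 2 ≤ n ∧ n ≤ 4 * r + 3 := by omega
    haveI : NeZero n := ⟨by omega⟩
    classical
    constructor
    · set s1 := (Finset.range n ×ˢ Finset.range (r + 1)).image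
          (fun p : ℕ × ℕ => e (p.1 : Fin n) ((p.1 + 2 * p.2 : ℕ) : Fin n)) with hs1
      have hcard1 : s1.card = n * (r + 1) := by
        rw [hs1, Finset.card_image_of_injOn, Finset.card_product, Finset.card_range,
          Finset.card_range]
        rintro ⟨p1, p2⟩ hp ⟨q1, q2⟩ hq h
        simp only [Finset.mem_coe, Finset.mem_product, Finset.mem_range] at hp hq
        dsimp only at h
        rw [E_eq_E] at h
        simp only [Prod.mk.injEq]
        have m1 := Nat.mod_eq_of_lt hp.1
        have m2 := Nat.mod_eq_of_lt hq.1
        have e1 := mod2 (show 0 < n by omega) (show p1 + 2 * p2 < 2 * n by omega)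
        have e2 := mod2 (show 0 < n by omega) (show q1 + 2 * q2 < 2 * n by omega)
        omega
      refine ⟨s1, ?_, ?_⟩
      · intro A hA B hB
        obtain ⟨⟨p1, p2⟩, hp, rfl⟩ := Finset.mem_image.mp hA
        obtain ⟨⟨q1, q2⟩, hq, rfl⟩ := Finset.mem_image.mp hB
        simp only [Finset.mem_product, Finset.mem_range] at hp hq
        exact stripes (by omega) hp.1 hq.1 (by omega)
      · rw [hcard1]; ring
    · rintro m ⟨s, hs, rfl⟩
      have h2 := card_le (by omega) s hs
      rcases hc with rfl | rfl
      · have hdiv : (4 * r + 2) / 2 = 2 * r + 1 := by omega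
        rw [hdiv] at h2
        have hring : (4 * r + 2) * (2 * r + 1) + (4 * r + 2) = 2 * ((r + 1) * (4 * r + 2)) := by
          ring
        rw [hring] at h2
        generalize hY : (r + 1) * (4 * r + 2) = Y at h2 ⊢
        omega
      · have hdiv : (4 * r + 3) / 2 = 2 * r + 1 := by omega
        rw [hdiv] at h2
        have hring : (4 * r + 3) * (2 * r + 1) + (4 * r + 3) = 2 * ((r + 1) * (4 * r + 3)) := by
          ring
        rw [hring] at h2
        generalize hY : (r + 1) * (4 * r + 3) = Y at h2 ⊢
        omega
end

section
/- For n = 4r or n = 4r+1, the set of multisets { {i, i+2t} : i ∈ Z_n, 0 ≤ t ≤ r−1 } ∪ { {i, i+2r} : 0 ≤ i ≤ 2r−1 } is an independent set of size r(n+2) in the 2-supertoken graph F_2(C_n). -/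
/-- The cycle graph on `ZMod n`: `i` and `j` are adjacent iff they are distinct and
differ by `1`. (For `n ≥ 3` this is the usual cycle `C_n`.) -/
def zmodCycle (n : ℕ) : SimpleGraph (ZMod n) :=
  SimpleGraph.fromRel (fun i j => i = j + 1)

/-- The vertex `{a, b}` of the 2-supertoken graph. -/
def sPair {n : ℕ} (a b : ZMod n) : Sym (ZMod n) 2 :=
  ⟨{a, b}, by simp [Multiset.insert_eq_cons]⟩


lemma pair_cons {α : Type*} {a b u : α} {S : Multiset α}
    (h : ({a, b} : Multiset α) = u ::ₘ S) : (u = a ∧ S = {b}) ∨ (u = b ∧ S = {a}) := by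
  rw [Multiset.insert_eq_cons] at h
  have hu : u ∈ (a ::ₘ ({b} : Multiset α)) := h ▸ Multiset.mem_cons_self u S
  rcases Multiset.mem_cons.mp hu with h1 | h1
  · subst h1
    exact Or.inl ⟨rfl, ((Multiset.cons_inj_right u).mp h).symm⟩
  · rw [Multiset.mem_singleton] at h1
    subst h1
    rw [show (a ::ₘ ({u} : Multiset α)) = u ::ₘ {a} by
      rw [← Multiset.insert_eq_cons, ← Multiset.insert_eq_cons, Multiset.pair_comm]] at h
    exact Or.inr ⟨rfl, ((Multiset.cons_inj_right u).mp h).symm⟩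

lemma sPair_eq_iff {n : ℕ} {a b c d : ZMod n} :
    sPair a b = sPair c d ↔ (a = c ∧ b = d) ∨ (a = d ∧ b = c) := by
  constructor
  · intro h
    have h' : ({a, b} : Multiset (ZMod n)) = c ::ₘ {d} := by
      have := congrArg Subtype.val h
      simpa [sPair, Multiset.insert_eq_cons] using this
    rcases pair_cons h' with ⟨h1, h2⟩ | ⟨h1, h2⟩
    · exact Or.inl ⟨h1.symm, (Multiset.singleton_inj.mp h2.symm)⟩
    · exact Or.inr ⟨(Multiset.singleton_inj.mp h2.symm), h1.symm⟩
  · rintro (⟨rfl, rfl⟩ | ⟨rfl, rfl⟩)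
    · rfl
    · exact Subtype.ext (Multiset.pair_comm a b)

lemma natCast_inj_of_lt {n : ℕ} {i j : ℕ} (hi : i < n) (hj : j < n)
    (h : (i : ZMod n) = j) : i = j := by
  haveI : NeZero n := ⟨by omega⟩
  have := congrArg ZMod.val h
  rwa [ZMod.val_cast_of_lt hi, ZMod.val_cast_of_lt hj] at this

lemma key_dvd {n r : ℕ} (hr : 1 ≤ r) (hn : n = 4*r ∨ n = 4*r+1) {m : ℤ}
    (hdvd : (n:ℤ) ∣ m) (hodd : m % 2 ≠ 0) (hb1 : -(4*(r:ℤ)+1) ≤ m) (hb2 : m ≤ 4*(r:ℤ)+1) :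
    n = 4*r+1 ∧ (m = 4*(r:ℤ)+1 ∨ m = -(4*(r:ℤ)+1)) := by
  obtain ⟨k, hk⟩ := hdvd
  have hn1 : (4:ℤ)*r ≤ n := by rcases hn with h | h <;> subst h <;> push_cast <;> omega
  have hn2 : (n:ℤ) ≤ 4*r+1 := by rcases hn with h | h <;> subst h <;> push_cast <;> omega
  have hr' : (1:ℤ) ≤ r := by exact_mod_cast hr
  have hk1 : k ≤ 1 := by
    by_contra hc
    push_neg at hc
    have h2 : (n:ℤ) * 2 ≤ n * k := by
      apply mul_le_mul_of_nonneg_left (by omega) (by positivity)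
    linarith
  have hk2 : -1 ≤ k := by
    by_contra hc
    push_neg at hc
    have h2 : (n:ℤ) * k ≤ n * (-2) := by
      apply mul_le_mul_of_nonneg_left (by omega) (by positivity)
    linarith
  interval_cases k <;> rcases hn with h | h <;> subst h <;> push_cast at hk hodd hb1 hb2 ⊢ <;> omega

lemma diff_kill {n r : ℕ} (hr : 1 ≤ r) (hn : n = 4*r ∨ n = 4*r+1) {t t' : ℕ}
    (ht : t ≤ r) (ht' : t' ≤ r)
    (h : ((2*(t:ℤ) - 2*(t':ℤ) - 1 : ℤ) : ZMod n) = 0) : False := by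
  haveI : NeZero n := ⟨by omega⟩
  have hd := (ZMod.intCast_zmod_eq_zero_iff_dvd _ n).mp h
  obtain ⟨h1, h2⟩ := key_dvd hr hn hd (by omega) (by push_cast; omega) (by push_cast; omega)
  omega

lemma sum_one_kill {n r : ℕ} (hr : 1 ≤ r) (hn : n = 4*r ∨ n = 4*r+1) {t t' : ℕ}
    (ht : t ≤ r) (ht' : t' ≤ r)
    (h : ((2*(t:ℤ) + 2*(t':ℤ) - 1 : ℤ) : ZMod n) = 0) : False := by
  haveI : NeZero n := ⟨by omega⟩
  have hd := (ZMod.intCast_zmod_eq_zero_iff_dvd _ n).mp h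
  obtain ⟨h1, h2⟩ := key_dvd hr hn hd (by omega) (by push_cast; omega) (by push_cast; omega)
  omega

lemma sum_neg_one {n r : ℕ} (hr : 1 ≤ r) (hn : n = 4*r ∨ n = 4*r+1) {t t' : ℕ}
    (ht : t ≤ r) (ht' : t' ≤ r)
    (h : ((2*(t:ℤ) + 2*(t':ℤ) + 1 : ℤ) : ZMod n) = 0) :
    n = 4*r+1 ∧ t = r ∧ t' = r := by
  haveI : NeZero n := ⟨by omega⟩
  have hd := (ZMod.intCast_zmod_eq_zero_iff_dvd _ n).mp h
  obtain ⟨h1, h2⟩ := key_dvd hr hn hd (by omega) (by push_cast; omega) (by push_cast; omega)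
  refine ⟨h1, by omega, by omega⟩

lemma danger_kill {n r : ℕ} (hr : 1 ≤ r) (hn : n = 4*r+1) {i j : ℕ}
    (hi : i < 2*r) (hj : j < 2*r)
    (h : (j : ZMod n) = (i : ZMod n) + 2*(r : ZMod n)) : False := by
  have h' : ((j : ℕ) : ZMod n) = ((i + 2*r : ℕ) : ZMod n) := by push_cast; linear_combination h
  have := natCast_inj_of_lt (by omega) (by omega) h'
  omega

theorem indep_part (n r : ℕ) (hr : 1 ≤ r) (hn : n = 4 * r ∨ n = 4 * r + 1)
    (a c : ZMod n) (t t' : ℕ) (ht : t ≤ r) (ht' : t' ≤ r)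
    (hta : t = r → ∃ i : ℕ, i < 2*r ∧ a = (i : ZMod n))
    (htc : t' = r → ∃ j : ℕ, j < 2*r ∧ c = (j : ZMod n)) :
    ¬ ((zmodCycle n).superToken 2).Adj (sPair a (a + 2 * t)) (sPair c (c + 2 * t')) := by
  rintro ⟨u, v, huv, S, h1, h2⟩
  rw [zmodCycle, SimpleGraph.fromRel_adj] at huv
  obtain ⟨-, hadj⟩ := huv
  have h1' : ({a, a + 2 * (t : ZMod n)} : Multiset (ZMod n)) = u ::ₘ S := h1
  have h2' : ({c, c + 2 * (t' : ZMod n)} : Multiset (ZMod n)) = v ::ₘ S := h2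
  rcases pair_cons h1' with ⟨rfl, hS1⟩ | ⟨rfl, hS1⟩ <;>
    rcases pair_cons h2' with ⟨rfl, hS2⟩ | ⟨rfl, hS2⟩ <;>
      rw [hS1] at hS2 <;> have hS := Multiset.singleton_inj.mp hS2
  -- case 1 : u = a, v = c, a + 2t = c + 2t'
  · rcases hadj with he | he
    · exact diff_kill hr hn ht' ht (by push_cast; linear_combination he - hS)
    · exact diff_kill hr hn ht ht' (by push_cast; linear_combination hS + he)
  -- case 2 : u = a, v = c + 2t', a + 2t = c
  · rcases hadj with he | he
    · obtain ⟨hn', htr, htr'⟩ := sum_neg_one hr hn ht ht' (by push_cast; linear_combination hS - he)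
      obtain ⟨i, hi, rfl⟩ := hta htr
      obtain ⟨j, hj, rfl⟩ := htc htr'
      subst htr
      exact danger_kill hr hn' hi hj hS.symm
    · exact sum_one_kill hr hn ht ht' (by push_cast; linear_combination he + hS)
  -- case 3 : u = a + 2t, v = c, a = c + 2t'
  · rcases hadj with he | he
    · exact sum_one_kill hr hn ht ht' (by push_cast; linear_combination he - hS)
    · obtain ⟨hn', htr, htr'⟩ := sum_neg_one hr hn ht ht' (by push_cast; linear_combination - hS - he)
      obtain ⟨i, hi, rfl⟩ := hta htr
      obtain ⟨j, hj, rfl⟩ := htc htr'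
      subst htr'
      exact danger_kill hr hn' hj hi hS
  -- case 4 : u = a + 2t, v = c + 2t', a = c
  · rcases hadj with he | he
    · exact diff_kill hr hn ht ht' (by push_cast; linear_combination he - hS)
    · exact diff_kill hr hn ht' ht (by push_cast; linear_combination he + hS)

def fdef (n r : ℕ) : (ZMod n × Fin r) ⊕ Fin (2*r) → Sym (ZMod n) 2
  | Sum.inl (a, t) => sPair a (a + 2 * ((t : ℕ) : ZMod n))
  | Sum.inr i => sPair (((i : ℕ) : ZMod n)) (((i : ℕ) : ZMod n) + 2 * (r : ZMod n))

lemma zero_of_small {n r : ℕ} (hr : 1 ≤ r) (hn : n = 4 * r ∨ n = 4 * r + 1)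
    {m : ℕ} (hm : m < 4 * r) (h : ((m : ℕ) : ZMod n) = 0) : m = 0 := by
  haveI : NeZero n := ⟨by omega⟩
  have hd := (ZMod.natCast_eq_zero_iff m n).mp h
  exact Nat.eq_zero_of_dvd_of_lt hd (by omega)

lemma fdef_injective (n r : ℕ) (hr : 1 ≤ r) (hn : n = 4 * r ∨ n = 4 * r + 1) :
    Function.Injective (fdef n r) := by
  have hcast : ∀ t t' : ℕ, t ≤ r → t' ≤ r → (2 * (t : ZMod n)) = 2 * (t' : ZMod n) → t = t' := by
    intro t t' ht ht' h
    have h' : ((2 * t : ℕ) : ZMod n) = ((2 * t' : ℕ) : ZMod n) := by push_cast; linear_combination h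
    have := natCast_inj_of_lt (n := n) (by omega) (by omega) h'
    omega
  rintro (⟨a, t⟩ | i) (⟨c, t'⟩ | j) h <;> simp only [fdef] at h
  · rcases sPair_eq_iff.mp h with ⟨rfl, h2⟩ | ⟨h1, h2⟩
    · have : (t : ℕ) = (t' : ℕ) := hcast _ _ (le_of_lt t.2) (le_of_lt t'.2) (by linear_combination h2)
      simp [Prod.ext_iff, Fin.ext_iff, this]
    · -- a = c + 2t' and a + 2t = c : 2(t+t') ≡ 0
      have h0 : ((2 * (t:ℕ) + 2 * (t':ℕ) : ℕ) : ZMod n) = 0 := by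
        push_cast
        linear_combination h2 - h1
      have := zero_of_small hr hn (m := 2 * (t:ℕ) + 2 * (t':ℕ)) (by have := t.2; have := t'.2; omega) h0
      have ht0 : (t : ℕ) = 0 := by omega
      have ht0' : (t' : ℕ) = 0 := by omega
      have : a = c := by rw [h1, ht0']; simp
      simp [Prod.ext_iff, Fin.ext_iff, this, ht0, ht0']
  · exfalso
    rcases sPair_eq_iff.mp h with ⟨rfl, h2⟩ | ⟨h1, h2⟩
    · have : (t : ℕ) = r := hcast _ _ (le_of_lt t.2) le_rfl (by linear_combination h2)
      have := t.2; omega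
    · have h0 : ((2 * (t:ℕ) + 2 * r : ℕ) : ZMod n) = 0 := by
        push_cast
        linear_combination h2 - h1
      have := zero_of_small hr hn (m := 2 * (t:ℕ) + 2 * r) (by have := t.2; omega) h0
      omega
  · exfalso
    rcases sPair_eq_iff.mp h with ⟨h1, h2⟩ | ⟨h1, h2⟩
    · have : r = (t' : ℕ) := hcast _ _ le_rfl (le_of_lt t'.2) (by linear_combination h2 - h1)
      have := t'.2; omega
    · have h0 : ((2 * (t':ℕ) + 2 * r : ℕ) : ZMod n) = 0 := by
        push_cast
        linear_combination h2 - h1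
      have := zero_of_small hr hn (m := 2 * (t':ℕ) + 2 * r) (by have := t'.2; omega) h0
      omega
  · rcases sPair_eq_iff.mp h with ⟨h1, h2⟩ | ⟨h1, h2⟩
    · have : (i : ℕ) = (j : ℕ) :=
        natCast_inj_of_lt (n := n) (by have := i.2; omega) (by have := j.2; omega) h1
      exact congrArg Sum.inr (Fin.ext this)
    · exfalso
      have h1' : ((i : ℕ) : ZMod n) = (((j : ℕ) + 2 * r : ℕ) : ZMod n) := by
        push_cast
        linear_combination h1
      have := natCast_inj_of_lt (n := n) (by have := i.2; omega) (by have := j.2; omega) h1'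
      have := i.2; omega


/-- For `n = 4r` or `n = 4r+1`, the set
`{ {i, i+2t} : i ∈ Z_n, 0 ≤ t ≤ r−1 } ∪ { {i, i+2r} : 0 ≤ i ≤ 2r−1 }` is an
independent set of size `r(n+2)` in the 2-supertoken graph `F₂(C_n)`. -/
theorem superToken_cycle_indepSet_zero_one_mod_four (n r : ℕ) (hr : 1 ≤ r)
    (hn : n = 4 * r ∨ n = 4 * r + 1) :
    (∀ A ∈ ({A : Sym (ZMod n) 2 | ∃ i : ZMod n, ∃ t : ℕ, t < r ∧
          A = sPair i (i + 2 * t)} ∪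
        {A : Sym (ZMod n) 2 | ∃ i : ℕ, i < 2 * r ∧
          A = sPair (i : ZMod n) ((i : ZMod n) + 2 * r)}),
      ∀ B ∈ ({A : Sym (ZMod n) 2 | ∃ i : ZMod n, ∃ t : ℕ, t < r ∧
          A = sPair i (i + 2 * t)} ∪
        {A : Sym (ZMod n) 2 | ∃ i : ℕ, i < 2 * r ∧
          A = sPair (i : ZMod n) ((i : ZMod n) + 2 * r)}),
        ¬ ((zmodCycle n).superToken 2).Adj A B) ∧
    ({A : Sym (ZMod n) 2 | ∃ i : ZMod n, ∃ t : ℕ, t < r ∧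
          A = sPair i (i + 2 * t)} ∪
        {A : Sym (ZMod n) 2 | ∃ i : ℕ, i < 2 * r ∧
          A = sPair (i : ZMod n) ((i : ZMod n) + 2 * r)}).ncard = r * (n + 2) := by
  haveI : NeZero n := ⟨by omega⟩
  set S : Set (Sym (ZMod n) 2) :=
    ({A : Sym (ZMod n) 2 | ∃ i : ZMod n, ∃ t : ℕ, t < r ∧
          A = sPair i (i + 2 * t)} ∪
        {A : Sym (ZMod n) 2 | ∃ i : ℕ, i < 2 * r ∧
          A = sPair (i : ZMod n) ((i : ZMod n) + 2 * r)}) with hS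
  have hext : ∀ A ∈ S, ∃ (a : ZMod n) (t : ℕ), t ≤ r ∧
      (t = r → ∃ i : ℕ, i < 2*r ∧ a = (i : ZMod n)) ∧ A = sPair a (a + 2 * t) := by
    rintro A (⟨i, t, ht, rfl⟩ | ⟨i, hi, rfl⟩)
    · exact ⟨i, t, le_of_lt ht, fun h => absurd h (by omega), rfl⟩
    · exact ⟨(i : ZMod n), r, le_rfl, fun _ => ⟨i, hi, rfl⟩, rfl⟩
  constructor
  · intro A hA B hB
    obtain ⟨a, t, ht, hta, rfl⟩ := hext A hA
    obtain ⟨c, t', ht', htc, rfl⟩ := hext B hB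
    exact indep_part n r hr hn a c t t' ht ht' hta htc
  · have hrange : S = Set.range (fdef n r) := by
      ext A
      simp only [hS, Set.mem_union, Set.mem_setOf_eq, Set.mem_range]
      constructor
      · rintro (⟨i, t, ht, rfl⟩ | ⟨i, hi, rfl⟩)
        · exact ⟨Sum.inl (i, ⟨t, ht⟩), rfl⟩
        · exact ⟨Sum.inr ⟨i, hi⟩, rfl⟩
      · rintro ⟨(⟨a, t⟩ | i), rfl⟩
        · exact Or.inl ⟨a, t, t.2, rfl⟩
        · exact Or.inr ⟨i, i.2, rfl⟩
    rw [hrange, ← Nat.card_coe_set_eq, Nat.card_range_of_injective (fdef_injective n r hr hn),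
      Nat.card_sum, Nat.card_prod, Nat.card_zmod, Nat.card_eq_fintype_card,
      Nat.card_eq_fintype_card, Fintype.card_fin, Fintype.card_fin]
    ring
end

section
/- For n = 4r+2 or n = 4r+3, the set of multisets { {i, i+2t} : i ∈ Z_n, 0 ≤ t ≤ r } is an independent set of size (r+1)n in the 2-supertoken graph F_2(C_n). -/
lemma pairEq {α : Type*} {a b c d : α} (h : ({a, b} : Multiset α) = {c, d}) :
    (a = c ∧ b = d) ∨ (a = d ∧ b = c) := by
  rw [Multiset.insert_eq_cons, Multiset.insert_eq_cons, Multiset.cons_eq_cons] at h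
  rcases h with ⟨h1, h2⟩ | ⟨_, cs, h1, h2⟩
  · left; exact ⟨h1, by simpa using h2⟩
  · right
    rw [Multiset.singleton_eq_cons_iff] at h1 h2
    exact ⟨h2.1.symm, h1.1⟩

lemma sym_cons {n : ℕ} (i b u : ZMod n) (S : Multiset (ZMod n))
    (hA : ((sPair i b : Sym (ZMod n) 2) : Multiset (ZMod n)) = u ::ₘ S) :
    ∃ a, ({i, b} : Multiset (ZMod n)) = {u, a} := by
  have hc := congrArg Multiset.card hA
  simp [sPair] at hc
  obtain ⟨a, rfl⟩ := Multiset.card_eq_one.mp hc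
  exact ⟨a, hA⟩

lemma sPair_eq {n : ℕ} {a b c d : ZMod n} (h : sPair a b = sPair c d) :
    (a = c ∧ b = d) ∨ (a = d ∧ b = c) :=
  pairEq (by simpa [sPair, Sym] using congrArg Subtype.val h)

lemma key (n r : ℕ) (hn : n = 4 * r + 2 ∨ n = 4 * r + 3) (m : ℤ) (hev : 2 ∣ m)
    (hm : |m| ≤ 4 * r) (h : (m : ZMod n) = 1 ∨ (m : ZMod n) = -1) : False := by
  have hm' := abs_le.mp hm
  rcases h with h | h
  · have hd : (n : ℤ) ∣ m - 1 := by
      have h0 : ((m - 1 : ℤ) : ZMod n) = 0 := by push_cast; rw [h]; ring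
      exact (ZMod.intCast_zmod_eq_zero_iff_dvd _ _).mp h0
    have hne : m - 1 ≠ 0 := by omega
    have hle := Int.le_of_dvd (abs_pos.mpr hne) ((dvd_abs _ _).mpr hd)
    have habs : |m - 1| ≤ 4 * r + 1 := abs_le.mpr (by omega)
    omega
  · have hd : (n : ℤ) ∣ m + 1 := by
      have h0 : ((m + 1 : ℤ) : ZMod n) = 0 := by push_cast; rw [h]; ring
      exact (ZMod.intCast_zmod_eq_zero_iff_dvd _ _).mp h0
    have hne : m + 1 ≠ 0 := by omega
    have hle := Int.le_of_dvd (abs_pos.mpr hne) ((dvd_abs _ _).mpr hd)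
    have habs : |m + 1| ≤ 4 * r + 1 := abs_le.mpr (by omega)
    omega


/-- For `n = 4r+2` or `n = 4r+3`, the set
`{ {i, i+2t} : i ∈ Z_n, 0 ≤ t ≤ r }` is an independent set of size `(r+1)n`
in the 2-supertoken graph `F₂(C_n)`. -/
theorem superToken_cycle_indepSet_two_three_mod_four (n r : ℕ)
    (hn : n = 4 * r + 2 ∨ n = 4 * r + 3) :
    (∀ A ∈ {A : Sym (ZMod n) 2 | ∃ i : ZMod n, ∃ t : ℕ, t ≤ r ∧
          A = sPair i (i + 2 * t)},
      ∀ B ∈ {A : Sym (ZMod n) 2 | ∃ i : ZMod n, ∃ t : ℕ, t ≤ r ∧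
          A = sPair i (i + 2 * t)},
        ¬ ((zmodCycle n).superToken 2).Adj A B) ∧
    ({A : Sym (ZMod n) 2 | ∃ i : ZMod n, ∃ t : ℕ, t ≤ r ∧
          A = sPair i (i + 2 * t)}).ncard = (r + 1) * n := by
  constructor
  · rintro A ⟨i, t, ht, rfl⟩ B ⟨j, s, hs, rfl⟩ ⟨u, v, huv, S, hA, hB⟩
    obtain ⟨a, hA'⟩ := sym_cons _ _ _ _ hA
    -- S = {a}; from hB, (sPair j _) = v ::ₘ S, need same S
    have hc := congrArg Multiset.card hA
    simp [sPair] at hc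
    obtain ⟨a', rfl⟩ := Multiset.card_eq_one.mp hc
    have hA2 : ({i, i + 2 * (t : ZMod n)} : Multiset (ZMod n)) = {u, a'} := hA
    have hB2 : ({j, j + 2 * (s : ZMod n)} : Multiset (ZMod n)) = {v, a'} := hB
    have hu : u - a' = 2 * (t : ZMod n) ∨ u - a' = -(2 * (t : ZMod n)) := by
      rcases pairEq hA2 with ⟨h1, h2⟩ | ⟨h1, h2⟩
      · right; linear_combination h2 - h1
      · left; linear_combination h1 - h2
    have hv : v - a' = 2 * (s : ZMod n) ∨ v - a' = -(2 * (s : ZMod n)) := by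
      rcases pairEq hB2 with ⟨h1, h2⟩ | ⟨h1, h2⟩
      · right; linear_combination h2 - h1
      · left; linear_combination h1 - h2
    have h3 : u - v = 1 ∨ u - v = -1 := by
      rcases huv.2 with h | h
      · left; linear_combination h
      · right; linear_combination -h
    rcases hu with hu | hu <;> rcases hv with hv | hv <;> rcases h3 with h3 | h3 <;>
      first
      | exact key n r hn (2*(t:ℤ) - 2*(s:ℤ)) ⟨(t:ℤ)-(s:ℤ), by ring⟩
          (abs_le.mpr ⟨by omega, by omega⟩)
          (Or.inl (by push_cast; linear_combination hv - hu + h3))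
      | exact key n r hn (2*(t:ℤ) - 2*(s:ℤ)) ⟨(t:ℤ)-(s:ℤ), by ring⟩
          (abs_le.mpr ⟨by omega, by omega⟩)
          (Or.inr (by push_cast; linear_combination hv - hu + h3))
      | exact key n r hn (2*(t:ℤ) + 2*(s:ℤ)) ⟨(t:ℤ)+(s:ℤ), by ring⟩
          (abs_le.mpr ⟨by omega, by omega⟩)
          (Or.inl (by push_cast; linear_combination hv - hu + h3))
      | exact key n r hn (2*(t:ℤ) + 2*(s:ℤ)) ⟨(t:ℤ)+(s:ℤ), by ring⟩
          (abs_le.mpr ⟨by omega, by omega⟩)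
          (Or.inr (by push_cast; linear_combination hv - hu + h3))
      | exact key n r hn (-(2*(t:ℤ)) - 2*(s:ℤ)) ⟨-(t:ℤ)-(s:ℤ), by ring⟩
          (abs_le.mpr ⟨by omega, by omega⟩)
          (Or.inl (by push_cast; linear_combination hv - hu + h3))
      | exact key n r hn (-(2*(t:ℤ)) - 2*(s:ℤ)) ⟨-(t:ℤ)-(s:ℤ), by ring⟩
          (abs_le.mpr ⟨by omega, by omega⟩)
          (Or.inr (by push_cast; linear_combination hv - hu + h3))
      | exact key n r hn (-(2*(t:ℤ)) + 2*(s:ℤ)) ⟨-(t:ℤ)+(s:ℤ), by ring⟩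
          (abs_le.mpr ⟨by omega, by omega⟩)
          (Or.inl (by push_cast; linear_combination hv - hu + h3))
      | exact key n r hn (-(2*(t:ℤ)) + 2*(s:ℤ)) ⟨-(t:ℤ)+(s:ℤ), by ring⟩
          (abs_le.mpr ⟨by omega, by omega⟩)
          (Or.inr (by push_cast; linear_combination hv - hu + h3))
  · have hn2 : 2 ≤ n := by omega
    haveI : NeZero n := ⟨by omega⟩
    have hset : {A : Sym (ZMod n) 2 | ∃ i : ZMod n, ∃ t : ℕ, t ≤ r ∧
          A = sPair i (i + 2 * t)} =
        Set.range (fun p : ZMod n × Fin (r + 1) => sPair p.1 (p.1 + 2 * (p.2 : ℕ))) := by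
      ext A
      constructor
      · rintro ⟨i, t, ht, rfl⟩
        exact ⟨(i, ⟨t, by omega⟩), rfl⟩
      · rintro ⟨⟨i, t⟩, rfl⟩
        exact ⟨i, t, by omega, rfl⟩
    have hinj : Function.Injective
        (fun p : ZMod n × Fin (r + 1) => sPair p.1 (p.1 + 2 * (p.2 : ℕ))) := by
      rintro ⟨i, t⟩ ⟨j, s⟩ h
      simp only at h
      have ht : (t : ℕ) ≤ r := by omega
      have hs : (s : ℕ) ≤ r := by omega
      rcases sPair_eq h with ⟨h1, h2⟩ | ⟨h1, h2⟩
      · subst h1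
        have h2' : ((2 * (t : ℕ) : ℕ) : ZMod n) = ((2 * (s : ℕ) : ℕ) : ZMod n) := by
          push_cast
          linear_combination h2
        have := congrArg ZMod.val h2'
        rw [ZMod.val_cast_of_lt (by omega), ZMod.val_cast_of_lt (by omega)] at this
        have : (t : ℕ) = (s : ℕ) := by omega
        exact Prod.ext rfl (Fin.ext this)
      · have h0 : ((2 * (t : ℕ) + 2 * (s : ℕ) : ℕ) : ZMod n) = 0 := by
          push_cast
          linear_combination h2 - h1
        have hdvd := (ZMod.natCast_eq_zero_iff _ _).mp h0
        have hlt : 2 * (t : ℕ) + 2 * (s : ℕ) < n := by omega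
        have h00 : 2 * (t : ℕ) + 2 * (s : ℕ) = 0 :=
          Nat.eq_zero_of_dvd_of_lt hdvd hlt
        have hts : (t : ℕ) = 0 ∧ (s : ℕ) = 0 := by omega
        have hij : i = j := by
          rw [h1, hts.2]
          push_cast
          ring
        exact Prod.ext hij (Fin.ext (show (t : ℕ) = (s : ℕ) by omega))
    rw [hset, ← Nat.card_coe_set_eq, Nat.card_range_of_injective hinj,
      Nat.card_prod, Nat.card_zmod, Nat.card_eq_fintype_card, Fintype.card_fin,
      Nat.mul_comm]
end
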